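/- arXiv:2306.10278 — 9 statements merged into one kernel-verified Lean document; each statement's English description precedes it below -/
import Mathlib

section
/- Let F: ℝ^d → ℝ be differentiable and convex, let X ⊆ ℝ^d be a closed convex set with diameter D = max_{x,y∈X} ‖x−y‖₂, and let x* ∈ X be a minimizer of F over X. Assume ∇F(x_t) ≠ 0 for every iterate below. Consider AdaGrad with a global step size: starting from x₁ ∈ X, for t = 1,…,T set Q_t = Σ_{i=1}^t ‖∇F(x_i)‖₂², η_t = D/√(2Q_t), and x_{t+1} = Π_X(x_t − η_t ∇F(x_t)), where Π_X is the Euclidean projection onto X. Then the average x̄ = (1/T)Σ_{t=1}^T x_t satisfies F(x̄) − F(x*) ≤ (√2·D/T)·√(Σ_{t=1}^T ‖∇F(x_t)‖₂²). -/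
/-!
Online-to-batch: by Jensen and the gradient inequality, `T (F x̄ - F x*)` is at most the linear
regret `∑ ⟪g_t, x_t - x*⟫` with `g_t = ∇F(x_t)`. Since the projection moves no point farther
from `x* ∈ X`, each step gives
`⟪g_t, x_t - x*⟫ ≤ (‖x_t - x*‖² - ‖x_{t+1} - x*‖²) / (2η_t) + η_t ‖g_t‖² / 2`.
As `1 / η_t` is nondecreasing and `‖x_t - x*‖ ≤ D`, summation by parts bounds the first terms by
`D² / (2η_T) = D √(Q_T / 2)`, and `∑ ‖g_t‖² / √Q_t ≤ 2 √Q_T` bounds the second by `D √(Q_T / 2)`.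
-/

open Finset
open scoped RealInnerProductSpace

theorem sub_div_sqrt_le_two_mul_sub_sqrt {p q : ℝ} (hp : 0 ≤ p) (hpq : p ≤ q) :
    (q - p) / √q ≤ 2 * (√q - √p) := by
  rcases hpq.eq_or_lt with rfl | hlt
  · simp
  have hq : 0 < √q := Real.sqrt_pos.mpr (hp.trans_lt hlt)
  have hsqrt : √p ≤ √q := Real.sqrt_le_sqrt hlt.le
  rw [div_le_iff₀ hq]
  nlinarith [Real.sq_sqrt hp, Real.sq_sqrt (hp.trans hlt.le), Real.sqrt_nonneg p]

theorem sum_Icc_div_sqrt_partial_sum_le {b : ℕ → ℝ} (hb : ∀ t, 0 ≤ b t) (n : ℕ) :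
    ∑ t ∈ Icc 1 n, b t / √(∑ i ∈ Icc 1 t, b i) ≤ 2 * √(∑ t ∈ Icc 1 n, b t) := by
  induction n with
  | zero => simp
  | succ n ih =>
    have hpartial : 0 ≤ ∑ i ∈ Icc 1 n, b i := sum_nonneg fun i _ => hb i
    have hterm := sub_div_sqrt_le_two_mul_sub_sqrt hpartial (le_add_of_nonneg_right (hb (n + 1)))
    rw [add_sub_cancel_left] at hterm
    simp only [sum_Icc_succ_top (Nat.le_add_left 1 n)]
    linarith

theorem sum_Icc_sub_mul_add_le {a c : ℕ → ℝ} {B : ℝ} (hc : Monotone c) (hc0 : c 0 = 0)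
    (n : ℕ) (haB : ∀ t ∈ Icc 1 n, a t ≤ B) :
    ∑ t ∈ Icc 1 n, (a t - a (t + 1)) * c t + a (n + 1) * c n ≤ B * c n := by
  induction n with
  | zero => simp [hc0]
  | succ n ih =>
    have ih := ih fun t ht => haB t (Icc_subset_Icc_right n.le_succ ht)
    have ha := haB (n + 1) (by simp)
    have hinc : 0 ≤ c (n + 1) - c n := sub_nonneg.mpr (hc n.le_succ)
    rw [sum_Icc_succ_top (Nat.le_add_left 1 n)]
    nlinarith [mul_le_mul_of_nonneg_right ha hinc]

theorem sum_Icc_sub_mul_le {a c : ℕ → ℝ} {B : ℝ} (hc : Monotone c) (hc0 : c 0 = 0) {n : ℕ}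
    (haB : ∀ t ∈ Icc 1 n, a t ≤ B) (ha : 0 ≤ a (n + 1)) :
    ∑ t ∈ Icc 1 n, (a t - a (t + 1)) * c t ≤ B * c n := by
  have hcn : 0 ≤ c n := hc0 ▸ hc n.zero_le
  nlinarith [sum_Icc_sub_mul_add_le hc hc0 n haB, mul_nonneg ha hcn]

theorem mem_of_proj_update {α : Type*} {X : Set α} {proj : α → α} (hprojmem : ∀ z, proj z ∈ X)
    {x : ℕ → α} (hx1 : x 1 ∈ X) {T : ℕ} {v : ℕ → α} (hupdate : ∀ t ∈ Icc 1 T, x (t + 1) = proj (v t)) :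
    ∀ t ∈ Icc 1 (T + 1), x t ∈ X := by
  intro t ht
  rw [mem_Icc] at ht
  rcases t with _ | _ | t
  · omega
  · exact hx1
  · rw [hupdate (t + 1) (mem_Icc.mpr ⟨by omega, by omega⟩)]
    exact hprojmem _

section

variable {E : Type*} [NormedAddCommGroup E] [InnerProductSpace ℝ E]
  {X : Set E} {proj : E → E}

theorem ConvexOn.inner_gradient_le_sub [CompleteSpace E] {s : Set E} {f : E → ℝ}
    (hf : ConvexOn ℝ s f) {u v : E} (hu : u ∈ s) (hv : v ∈ s) (hd : DifferentiableAt ℝ f u) :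
    ⟪gradient f u, v - u⟫ ≤ f v - f u := by
  set ℓ : ℝ →ᵃ[ℝ] E := AffineMap.lineMap u v
  have hφ : ConvexOn ℝ (Set.Icc 0 1) (f ∘ ℓ) :=
    (hf.comp_affineMap ℓ).subset (fun _ ht => hf.1.lineMap_mem hu hv ht) (convex_Icc 0 1)
  have hℓ : HasDerivAt ℓ (v - u) 0 := by
    have : ⇑ℓ = fun t : ℝ => t • (v - u) + u := funext fun t => AffineMap.lineMap_apply_module' ..
    simpa [this] using ((hasDerivAt_id (0 : ℝ)).smul_const (v - u)).add_const u
  have hderiv : HasDerivAt (f ∘ ℓ) ⟪gradient f u, v - u⟫ 0 := by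
    have hfu := hasGradientAt_iff_hasFDerivAt.mp hd.hasGradientAt
    rw [← AffineMap.lineMap_apply_zero (k := ℝ) u v] at hfu
    simpa using hfu.comp_hasDerivAt 0 hℓ
  simpa [slope_def_field, ℓ] using
    hφ.le_slope_of_hasDerivAt (by simp) (by simp) one_pos hderiv

theorem ConvexOn.map_average_sub_le_average_inner_gradient [CompleteSpace E] {K : Set E}
    {F : E → ℝ} (hF : ConvexOn ℝ K F) {ι : Type*} {s : Finset ι} (hs : s.Nonempty)
    {p : ι → E} (hp : ∀ i ∈ s, p i ∈ K) (hd : ∀ i ∈ s, DifferentiableAt ℝ F (p i))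
    {y : E} (hy : y ∈ K) :
    F ((#s : ℝ)⁻¹ • ∑ i ∈ s, p i) - F y ≤ (#s : ℝ)⁻¹ * ∑ i ∈ s, ⟪gradient F (p i), p i - y⟫ := by
  have hcard : (0 : ℝ) < #s := by exact_mod_cast hs.card_pos
  have hjensen : F ((#s : ℝ)⁻¹ • ∑ i ∈ s, p i) ≤ ∑ i ∈ s, (#s : ℝ)⁻¹ * F (p i) := by
    rw [smul_sum]
    refine hF.map_sum_le (fun _ _ => by positivity) ?_ hp
    rw [sum_const, nsmul_eq_mul, mul_inv_cancel₀ hcard.ne']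
  have hgrad : ∀ i ∈ s, F (p i) - F y ≤ ⟪gradient F (p i), p i - y⟫ := fun i hi => by
    have := hF.inner_gradient_le_sub (hp i hi) hy (hd i hi)
    rw [← neg_sub (p i) y, inner_neg_right] at this
    linarith
  calc F ((#s : ℝ)⁻¹ • ∑ i ∈ s, p i) - F y
      ≤ (#s : ℝ)⁻¹ * ∑ i ∈ s, (F (p i) - F y) := by
        rw [mul_sum]
        simp only [mul_sub, sum_sub_distrib, sum_const, nsmul_eq_mul, ← mul_assoc,
          mul_inv_cancel₀ hcard.ne', one_mul]
        linarith
    _ ≤ (#s : ℝ)⁻¹ * ∑ i ∈ s, ⟪gradient F (p i), p i - y⟫ := by gcongr with i hi; exact hgrad i hi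

theorem norm_proj_sub_sq_le (hX : Convex ℝ X) (hprojmem : ∀ z, proj z ∈ X)
    (hproj : ∀ z, ∀ y ∈ X, ‖proj z - z‖ ≤ ‖y - z‖) (z : E) {y : E} (hy : y ∈ X) :
    ‖proj z - y‖ ^ 2 ≤ ‖z - y‖ ^ 2 := by
  have : Nonempty X := ⟨⟨y, hy⟩⟩
  have hmin : ‖z - proj z‖ = ⨅ w : X, ‖z - w‖ := by
    refine le_antisymm (le_ciInf fun w => ?_) ?_
    · simpa only [norm_sub_rev z] using hproj z w w.2
    · exact ciInf_le (f := fun w : X => ‖z - (w : E)‖)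
        ⟨0, Set.forall_mem_range.2 fun _ => norm_nonneg _⟩ ⟨proj z, hprojmem z⟩
  have hvar := (norm_eq_iInf_iff_real_inner_le_zero hX (hprojmem z)).mp hmin y hy
  have hsplit := norm_add_sq_real (z - proj z) (proj z - y)
  rw [sub_add_sub_cancel, ← neg_sub y (proj z), inner_neg_right, norm_neg] at hsplit
  rw [norm_sub_rev (proj z) y]
  nlinarith [sq_nonneg ‖z - proj z‖]

theorem inner_le_of_proj_step (hX : Convex ℝ X) (hprojmem : ∀ z, proj z ∈ X)
    (hproj : ∀ z, ∀ y ∈ X, ‖proj z - z‖ ≤ ‖y - z‖) {η : ℝ} (hη : 0 < η) (x g : E) {y : E}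
    (hy : y ∈ X) :
    ⟪g, x - y⟫ ≤ (‖x - y‖ ^ 2 - ‖proj (x - η • g) - y‖ ^ 2) / (2 * η) + η / 2 * ‖g‖ ^ 2 := by
  have hnonexp := norm_proj_sub_sq_le hX hprojmem hproj (x - η • g) hy
  have hexpand : ‖x - η • g - y‖ ^ 2 = ‖x - y‖ ^ 2 - 2 * η * ⟪g, x - y⟫ + η ^ 2 * ‖g‖ ^ 2 := by
    rw [sub_right_comm, norm_sub_sq_real, real_inner_smul_right, norm_smul, real_inner_comm,
      Real.norm_eq_abs, mul_pow, sq_abs]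
    ring
  rw [div_add' _ _ _ (by positivity), le_div_iff₀ (by positivity)]
  nlinarith

theorem adagrad_regret_le (hX : Convex ℝ X) {D : ℝ} (hD : ∀ x ∈ X, ∀ y ∈ X, ‖x - y‖ ≤ D)
    (hprojmem : ∀ z, proj z ∈ X) (hproj : ∀ z, ∀ y ∈ X, ‖proj z - z‖ ≤ ‖y - z‖)
    {g x : ℕ → E} (hg1 : g 1 ≠ 0) (hx1 : x 1 ∈ X) {T : ℕ}
    (hupdate : ∀ t ∈ Icc 1 T,
      x (t + 1) = proj (x t - (D / √(2 * ∑ i ∈ Icc 1 t, ‖g i‖ ^ 2)) • g t))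
    {y : E} (hy : y ∈ X) :
    ∑ t ∈ Icc 1 T, ⟪g t, x t - y⟫ ≤ √2 * D * √(∑ t ∈ Icc 1 T, ‖g t‖ ^ 2) := by
  have hxT : ∀ t ∈ Icc 1 T, x t ∈ X := fun t ht =>
    mem_of_proj_update hprojmem hx1 hupdate t (Icc_subset_Icc_right T.le_succ ht)
  rcases (norm_nonneg _ |>.trans (hD y hy y hy)).eq_or_lt with rfl | hD0
  · have hxy : ∀ t ∈ Icc 1 T, x t = y := fun t ht =>
      sub_eq_zero.mp (norm_le_zero_iff.mp (hD _ (hxT t ht) y hy))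
    rw [mul_zero, zero_mul]
    exact (sum_eq_zero fun t ht => by rw [hxy t ht, sub_self, inner_zero_right]).le
  set Q : ℕ → ℝ := fun t => ∑ i ∈ Icc 1 t, ‖g i‖ ^ 2
  set a : ℕ → ℝ := fun t => ‖x t - y‖ ^ 2
  -- `c t = 1 / (2 η_t)`
  set c : ℕ → ℝ := fun t => √(2 * Q t) / (2 * D)
  have hQpos : ∀ t ∈ Icc 1 T, 0 < Q t := fun t ht =>
    (pow_pos (norm_pos_iff.mpr hg1) 2).trans_le <|
      single_le_sum (fun i _ => sq_nonneg ‖g i‖) (mem_Icc.mpr ⟨le_rfl, (mem_Icc.mp ht).1⟩)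
  have hstep : ∀ t ∈ Icc 1 T,
      ⟪g t, x t - y⟫ ≤ (a t - a (t + 1)) * c t + D / (2 * √2) * (‖g t‖ ^ 2 / √(Q t)) := by
    intro t ht
    have hQt := hQpos t ht
    have := inner_le_of_proj_step hX hprojmem hproj (η := D / √(2 * Q t)) (by positivity)
      (x t) (g t) hy
    rw [← hupdate t ht] at this
    convert this using 2
    · simp only [a, c]
      field_simp
    · rw [Real.sqrt_mul zero_le_two]
      field_simp
  have hQmono : Monotone Q := fun s t hst =>
    sum_le_sum_of_subset_of_nonneg (Icc_subset_Icc_right hst) fun i _ _ => sq_nonneg ‖g i‖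
  have hc_mono : Monotone c := fun s t hst => by
    simp only [c]; gcongr; exact hQmono hst
  calc ∑ t ∈ Icc 1 T, ⟪g t, x t - y⟫
      ≤ ∑ t ∈ Icc 1 T, (a t - a (t + 1)) * c t
          + D / (2 * √2) * ∑ t ∈ Icc 1 T, ‖g t‖ ^ 2 / √(Q t) := by
        rw [mul_sum, ← sum_add_distrib]
        exact sum_le_sum hstep
    _ ≤ D ^ 2 * c T + D / (2 * √2) * (2 * √(Q T)) := by
        gcongr
        · exact sum_Icc_sub_mul_le hc_mono (by simp [c, Q])
            (fun t ht => pow_le_pow_left₀ (norm_nonneg _) (hD _ (hxT t ht) y hy) 2)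
            (sq_nonneg _)
        · exact sum_Icc_div_sqrt_partial_sum_le (fun t => sq_nonneg ‖g t‖) T
    _ = √2 * D * √(Q T) := by
        simp only [c, Real.sqrt_mul zero_le_two]
        field_simp
        rw [Real.sq_sqrt zero_le_two]
        ring

end

theorem adagrad_global_stepsize_bound_general {d : ℕ}
    (F : EuclideanSpace ℝ (Fin d) → ℝ)
    (X : Set (EuclideanSpace ℝ (Fin d)))
    (hF : Differentiable ℝ F) (hconv : ConvexOn ℝ Set.univ F)
    (hXconv : Convex ℝ X)
    (D : ℝ) (hD : ∀ x ∈ X, ∀ y ∈ X, ‖x - y‖ ≤ D)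
    (xstar : EuclideanSpace ℝ (Fin d)) (hxstar : xstar ∈ X)
    (proj : EuclideanSpace ℝ (Fin d) → EuclideanSpace ℝ (Fin d))
    (hprojmem : ∀ z, proj z ∈ X)
    (hproj : ∀ z, ∀ y ∈ X, ‖proj z - z‖ ≤ ‖y - z‖)
    (T : ℕ) (hT : 1 ≤ T)
    (x : ℕ → EuclideanSpace ℝ (Fin d)) (hx1 : x 1 ∈ X)
    (hgrad : ∀ t ∈ Finset.Icc 1 T, gradient F (x t) ≠ 0)
    (hupdate : ∀ t ∈ Finset.Icc 1 T,
      x (t + 1) = proj (x t -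
        (D / Real.sqrt (2 * ∑ i ∈ Finset.Icc 1 t, ‖gradient F (x i)‖ ^ 2)) •
          gradient F (x t))) :
    F ((T : ℝ)⁻¹ • ∑ t ∈ Finset.Icc 1 T, x t) - F xstar ≤
      Real.sqrt 2 * D / T * Real.sqrt (∑ t ∈ Finset.Icc 1 T, ‖gradient F (x t)‖ ^ 2) := by
  have hcard : #(Icc 1 T) = T := by simp
  have hbatch := hconv.map_average_sub_le_average_inner_gradient (s := Icc 1 T)
    (nonempty_Icc.mpr hT) (fun t _ => Set.mem_univ (x t)) (fun t _ => hF (x t))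
    (Set.mem_univ xstar)
  have hregret := adagrad_regret_le hXconv hD hprojmem hproj
    (hgrad 1 (mem_Icc.mpr ⟨le_rfl, hT⟩)) hx1 hupdate hxstar
  rw [hcard] at hbatch
  calc F ((T : ℝ)⁻¹ • ∑ t ∈ Icc 1 T, x t) - F xstar
      ≤ (T : ℝ)⁻¹ * ∑ t ∈ Icc 1 T, ⟪gradient F (x t), x t - xstar⟫ := hbatch
    _ ≤ (T : ℝ)⁻¹ * (√2 * D * √(∑ t ∈ Icc 1 T, ‖gradient F (x t)‖ ^ 2)) := by gcongr
    _ = √2 * D / T * √(∑ t ∈ Icc 1 T, ‖gradient F (x t)‖ ^ 2) := by ring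

/-- AdaGrad with a global step size on a convex function over a bounded closed convex set. -/
theorem adagrad_global_stepsize_bound {d : ℕ}
    (F : EuclideanSpace ℝ (Fin d) → ℝ)
    (X : Set (EuclideanSpace ℝ (Fin d)))
    (hF : Differentiable ℝ F) (hconv : ConvexOn ℝ Set.univ F)
    (hXconv : Convex ℝ X) (hXclosed : IsClosed X)
    (D : ℝ) (hD : ∀ x ∈ X, ∀ y ∈ X, ‖x - y‖ ≤ D)
    (xstar : EuclideanSpace ℝ (Fin d)) (hxstar : xstar ∈ X)
    (hmin : ∀ y ∈ X, F xstar ≤ F y)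
    (proj : EuclideanSpace ℝ (Fin d) → EuclideanSpace ℝ (Fin d))
    (hprojmem : ∀ z, proj z ∈ X)
    (hproj : ∀ z, ∀ y ∈ X, ‖proj z - z‖ ≤ ‖y - z‖)
    (T : ℕ) (hT : 1 ≤ T)
    (x : ℕ → EuclideanSpace ℝ (Fin d)) (hx1 : x 1 ∈ X)
    (hgrad : ∀ t ∈ Finset.Icc 1 T, gradient F (x t) ≠ 0)
    (hupdate : ∀ t ∈ Finset.Icc 1 T,
      x (t + 1) = proj (x t -
        (D / Real.sqrt (2 * ∑ i ∈ Finset.Icc 1 t, ‖gradient F (x i)‖ ^ 2)) •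
          gradient F (x t))) :
    F ((T : ℝ)⁻¹ • ∑ t ∈ Finset.Icc 1 T, x t) - F xstar ≤
      Real.sqrt 2 * D / T * Real.sqrt (∑ t ∈ Finset.Icc 1 T, ‖gradient F (x t)‖ ^ 2) :=
  adagrad_global_stepsize_bound_general F X hF hconv hXconv D hD xstar hxstar proj hprojmem hproj T
    hT x hx1 hgrad hupdate
end

section
/- Let F: ℝ^d → ℝ be differentiable and convex, let X ⊆ ℝ^d be a closed convex set with diameter D = max_{x,y∈X} ‖x−y‖₂, and let x* ∈ X be a minimizer of F over X. Fix a constant step size η > 0 and consider projected gradient descent: starting from x₁ ∈ X, x_{t+1} = Π_X(x_t − η∇F(x_t)). Then the average x̄ = (1/T)Σ_{t=1}^T x_t satisfies F(x̄) − F(x*) ≤ D²/(2ηT) + (η/(2T))·Σ_{t=1}^T ‖∇F(x_t)‖₂². -/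
/-!
The distance to any `u ∈ X` evolves as
`‖x_{t+1} - u‖² ≤ ‖x_t - η g_t - u‖² = ‖x_t - u‖² - 2η⟪g_t, x_t - u⟫ + η²‖g_t‖²`,
since projecting onto a convex set does not increase distances to its points.
Summing telescopes the distances, leaving `‖x_1 - u‖² ≤ D²`. With `u = x*`, convexity bounds
`F(x_t) - F(x*)` by `⟪∇F(x_t), x_t - x*⟫`, and Jensen's inequality passes to the average.
-/

open InnerProductSpace Finset

variable {E : Type*} [NormedAddCommGroup E] [InnerProductSpace ℝ E]

theorem ConvexOn.sub_le_inner_gradient [CompleteSpace E] {s : Set E} {f : E → ℝ}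
    (hf : ConvexOn ℝ s f) {a b : E} (ha : a ∈ s) (hb : b ∈ s) (hfa : DifferentiableAt ℝ f a) :
    f a - f b ≤ ⟪gradient f a, a - b⟫_ℝ := by
  set ℓ : ℝ →ᵃ[ℝ] E := AffineMap.lineMap a b
  have hline : ConvexOn ℝ (ℓ ⁻¹' s) (f ∘ ℓ) := hf.comp_affineMap ℓ
  have hderiv : HasDerivAt (f ∘ ℓ) ⟪gradient f a, b - a⟫_ℝ 0 := by
    have hfa' : HasFDerivAt f (toDual ℝ E (gradient f a)) (ℓ 0) := by
      simpa [ℓ] using hfa.hasGradientAt.hasFDerivAt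
    simpa using hfa'.comp_hasDerivAt (0 : ℝ) AffineMap.hasDerivAt_lineMap
  have hslope :=
    hline.le_slope_of_hasDerivAt (by simpa [ℓ] using ha) (by simpa [ℓ] using hb) one_pos hderiv
  rw [← neg_sub b a, inner_neg_right]
  simp only [slope_def_field, Function.comp_apply, ℓ, AffineMap.lineMap_apply_zero,
    AffineMap.lineMap_apply_one, sub_zero, div_one] at hslope
  linarith

theorem Convex.norm_sub_le_of_forall_norm_sub_le {X : Set E} (hX : Convex ℝ X) {z p y : E}
    (hp : p ∈ X) (hnearest : ∀ w ∈ X, ‖p - z‖ ≤ ‖w - z‖) (hy : y ∈ X) :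
    ‖p - y‖ ≤ ‖z - y‖ := by
  have : Nonempty X := ⟨⟨p, hp⟩⟩
  have hinf : ‖z - p‖ = ⨅ w : X, ‖z - w‖ :=
    le_antisymm (le_ciInf fun w => by simpa only [norm_sub_rev z] using hnearest w w.2)
      (ciInf_le ⟨0, Set.forall_mem_range.2 fun _ => norm_nonneg _⟩ (⟨p, hp⟩ : X))
  have hobtuse : ⟪z - p, y - p⟫_ℝ ≤ 0 := (norm_eq_iInf_iff_real_inner_le_zero hX hp).1 hinf y hy
  have hsplit : ‖z - y‖ ^ 2 = ‖z - p‖ ^ 2 - 2 * ⟪z - p, y - p⟫_ℝ + ‖p - y‖ ^ 2 := by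
    rw [← sub_add_sub_cancel z p y, norm_add_sq_real, ← neg_sub y p, inner_neg_right]
    ring
  refine le_of_sq_le_sq ?_ (norm_nonneg _)
  nlinarith [sq_nonneg ‖z - p‖]

theorem two_mul_inner_le_of_norm_sub_le {x x' g u : E} (η : ℝ)
    (hstep : ‖x' - u‖ ≤ ‖x - η • g - u‖) :
    2 * η * ⟪g, x - u⟫_ℝ ≤ ‖x - u‖ ^ 2 - ‖x' - u‖ ^ 2 + η ^ 2 * ‖g‖ ^ 2 := by
  have hexpand : ‖x - η • g - u‖ ^ 2 = ‖x - u‖ ^ 2 - 2 * η * ⟪g, x - u⟫_ℝ + η ^ 2 * ‖g‖ ^ 2 := by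
    rw [sub_right_comm, norm_sub_sq_real, real_inner_smul_right, norm_smul, real_inner_comm,
      mul_pow, Real.norm_eq_abs, sq_abs]
    ring
  nlinarith [pow_le_pow_left₀ (norm_nonneg _) hstep 2]

theorem two_mul_sum_inner_le_of_norm_sub_le {x g : ℕ → E} {u : E} (η : ℝ) (T : ℕ)
    (hstep : ∀ t ∈ Icc 1 T, ‖x (t + 1) - u‖ ≤ ‖x t - η • g t - u‖) :
    2 * η * ∑ t ∈ Icc 1 T, ⟪g t, x t - u⟫_ℝ ≤
      ‖x 1 - u‖ ^ 2 - ‖x (T + 1) - u‖ ^ 2 + η ^ 2 * ∑ t ∈ Icc 1 T, ‖g t‖ ^ 2 := by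
  have htelescope : ∑ t ∈ Icc 1 T, (‖x t - u‖ ^ 2 - ‖x (t + 1) - u‖ ^ 2) =
      ‖x 1 - u‖ ^ 2 - ‖x (T + 1) - u‖ ^ 2 := by
    rw [← Ico_add_one_right_eq_Icc, ← neg_sub,
      ← sum_Ico_sub (f := fun t => ‖x t - u‖ ^ 2) (by omega : 1 ≤ T + 1), ← sum_neg_distrib]
    simp only [neg_sub]
  calc 2 * η * ∑ t ∈ Icc 1 T, ⟪g t, x t - u⟫_ℝ
      = ∑ t ∈ Icc 1 T, 2 * η * ⟪g t, x t - u⟫_ℝ := mul_sum ..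
    _ ≤ ∑ t ∈ Icc 1 T, (‖x t - u‖ ^ 2 - ‖x (t + 1) - u‖ ^ 2 + η ^ 2 * ‖g t‖ ^ 2) :=
      sum_le_sum fun t ht => two_mul_inner_le_of_norm_sub_le η (hstep t ht)
    _ = ‖x 1 - u‖ ^ 2 - ‖x (T + 1) - u‖ ^ 2 + η ^ 2 * ∑ t ∈ Icc 1 T, ‖g t‖ ^ 2 := by
      rw [sum_add_distrib, htelescope, mul_sum]

theorem ConvexOn.map_inv_card_smul_sum_le {ι : Type*} {s : Set E} {f : E → ℝ}
    (hf : ConvexOn ℝ s f) {t : Finset ι} (ht : t.Nonempty) {p : ι → E} (hp : ∀ i ∈ t, p i ∈ s) :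
    f ((#t : ℝ)⁻¹ • ∑ i ∈ t, p i) ≤ (#t : ℝ)⁻¹ * ∑ i ∈ t, f (p i) := by
  have hcard : (0 : ℝ) < #t := by exact_mod_cast ht.card_pos
  have := hf.map_sum_le (w := fun _ => (#t : ℝ)⁻¹) (fun _ _ => by positivity)
    (by simp [hcard.ne']) hp
  simpa only [← smul_sum, smul_eq_mul, ← mul_sum] using this

theorem projected_gd_constant_stepsize_bound_general {d : ℕ}
    (F : EuclideanSpace ℝ (Fin d) → ℝ)
    (X : Set (EuclideanSpace ℝ (Fin d)))
    (hF : Differentiable ℝ F) (hconv : ConvexOn ℝ Set.univ F)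
    (hXconv : Convex ℝ X)
    (D : ℝ) (hD : ∀ x ∈ X, ∀ y ∈ X, ‖x - y‖ ≤ D)
    (xstar : EuclideanSpace ℝ (Fin d)) (hxstar : xstar ∈ X)
    (proj : EuclideanSpace ℝ (Fin d) → EuclideanSpace ℝ (Fin d))
    (hprojmem : ∀ z, proj z ∈ X)
    (hproj : ∀ z, ∀ y ∈ X, ‖proj z - z‖ ≤ ‖y - z‖)
    (η : ℝ) (hη : 0 < η)
    (T : ℕ) (hT : 1 ≤ T)
    (x : ℕ → EuclideanSpace ℝ (Fin d)) (hx1 : x 1 ∈ X)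
    (hupdate : ∀ t ∈ Finset.Icc 1 T, x (t + 1) = proj (x t - η • gradient F (x t))) :
    F ((T : ℝ)⁻¹ • ∑ t ∈ Finset.Icc 1 T, x t) - F xstar ≤
      D ^ 2 / (2 * η * T) + η / (2 * T) * ∑ t ∈ Finset.Icc 1 T, ‖gradient F (x t)‖ ^ 2 := by
  have hT0 : (0 : ℝ) < T := by exact_mod_cast hT
  set S := ∑ t ∈ Icc 1 T, ⟪gradient F (x t), x t - xstar⟫_ℝ
  set G := ∑ t ∈ Icc 1 T, ‖gradient F (x t)‖ ^ 2
  have hjensen : F ((T : ℝ)⁻¹ • ∑ t ∈ Icc 1 T, x t) ≤ (T : ℝ)⁻¹ * ∑ t ∈ Icc 1 T, F (x t) := by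
    simpa using hconv.map_inv_card_smul_sum_le (nonempty_Icc.2 hT) fun t _ => Set.mem_univ (x t)
  have hconvex : ∑ t ∈ Icc 1 T, F (x t) ≤ T * F xstar + S := by
    have := sum_le_sum fun t (_ : t ∈ Icc 1 T) =>
      hconv.sub_le_inner_gradient (Set.mem_univ (x t)) (Set.mem_univ xstar) (hF (x t))
    rw [sum_sub_distrib, sum_const, Nat.card_Icc, nsmul_eq_mul] at this
    push_cast at this
    linarith
  have hregret : 2 * η * S ≤ D ^ 2 + η ^ 2 * G := by
    have hstep : ∀ t ∈ Icc 1 T, ‖x (t + 1) - xstar‖ ≤ ‖x t - η • gradient F (x t) - xstar‖ :=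
      fun t ht => hupdate t ht ▸
        hXconv.norm_sub_le_of_forall_norm_sub_le (hprojmem _) (hproj _) hxstar
    have hstart : ‖x 1 - xstar‖ ^ 2 ≤ D ^ 2 :=
      pow_le_pow_left₀ (norm_nonneg _) (hD _ hx1 _ hxstar) 2
    linarith [two_mul_sum_inner_le_of_norm_sub_le η T hstep, sq_nonneg ‖x (T + 1) - xstar‖]
  calc F ((T : ℝ)⁻¹ • ∑ t ∈ Icc 1 T, x t) - F xstar ≤ (T : ℝ)⁻¹ * S := by
        have := mul_le_mul_of_nonneg_left hconvex (inv_nonneg.2 hT0.le)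
        rw [mul_add, inv_mul_cancel_left₀ hT0.ne'] at this
        linarith
    _ ≤ (T : ℝ)⁻¹ * ((D ^ 2 + η ^ 2 * G) / (2 * η)) := by
        gcongr
        rw [le_div_iff₀ (by positivity)]
        linarith
    _ = D ^ 2 / (2 * η * T) + η / (2 * T) * G := by
        field_simp

/-- Projected gradient descent with a constant step size on a convex function. -/
theorem projected_gd_constant_stepsize_bound {d : ℕ}
    (F : EuclideanSpace ℝ (Fin d) → ℝ)
    (X : Set (EuclideanSpace ℝ (Fin d)))
    (hF : Differentiable ℝ F) (hconv : ConvexOn ℝ Set.univ F)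
    (hXconv : Convex ℝ X) (hXclosed : IsClosed X)
    (D : ℝ) (hD : ∀ x ∈ X, ∀ y ∈ X, ‖x - y‖ ≤ D)
    (xstar : EuclideanSpace ℝ (Fin d)) (hxstar : xstar ∈ X)
    (hmin : ∀ y ∈ X, F xstar ≤ F y)
    (proj : EuclideanSpace ℝ (Fin d) → EuclideanSpace ℝ (Fin d))
    (hprojmem : ∀ z, proj z ∈ X)
    (hproj : ∀ z, ∀ y ∈ X, ‖proj z - z‖ ≤ ‖y - z‖)
    (η : ℝ) (hη : 0 < η)
    (T : ℕ) (hT : 1 ≤ T)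
    (x : ℕ → EuclideanSpace ℝ (Fin d)) (hx1 : x 1 ∈ X)
    (hupdate : ∀ t ∈ Finset.Icc 1 T, x (t + 1) = proj (x t - η • gradient F (x t))) :
    F ((T : ℝ)⁻¹ • ∑ t ∈ Finset.Icc 1 T, x t) - F xstar ≤
      D ^ 2 / (2 * η * T) + η / (2 * T) * ∑ t ∈ Finset.Icc 1 T, ‖gradient F (x t)‖ ^ 2 :=
  projected_gd_constant_stepsize_bound_general F X hF hconv hXconv D hD xstar hxstar proj hprojmem
    hproj η hη T hT x hx1 hupdate
end

section
/- Let F: ℝ^d → ℝ be L-smooth and bounded below by F*. On a probability space with filtration (𝔉_t), consider the per-coordinate SGD update x_{t+1} = x_t − η_t ∘ g_t (coordinate-wise product), where η_t ∈ ℝ^d is 𝔉_{t−1}-measurable with nonnegative entries, and g_t, g'_t are 𝔉_t-measurable with E[g_t | 𝔉_{t−1}] = E[g'_t | 𝔉_{t−1}] = ∇F(x_t), E[g_{t,j} g'_{t,j} | 𝔉_{t−1}] = (∂_j F(x_t))² for each j, and E[(g_{t,j} − ∂_j F(x_t))² | 𝔉_{t−1}] ≤ σ_j². Define ℓ_t(η)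 = Σ_{j=1}^d (−η_j g_{t,j} g'_{t,j} + (L/2) η_j² g_{t,j}²) and Regret_T(η) = Σ_{t=1}^T (ℓ_t(η_t) − ℓ_t(η)). Then for any η ∈ ℝ^d with η_j > 0 for all j: E[Σ_{t=1}^T Σ_{j=1}^d (η_j − (L/2)η_j²)(∂_j F(x_t))²] ≤ F(x₁) − F* + E[Regret_T(η)] + (LT/2)·Σ_{j=1}^d η_j² σ_j². -/
/-!
Along the iterates, the descent lemma for the `L`-smooth `F` bounds `F x_{t+1} - F x_t` by the
surrogate loss `ℓ_t(η_t)` with the second stochastic gradient `g'_t` replaced by the true gradient.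
In expectation the two agree: `η_t` is known at time `t - 1`, and `g_t` and `g_t ∘ g'_t` have the
conditional means `∇F x_t` and `(∇F x_t)²`. Summed over `t`, the decrements of `𝔼 F x_t` telescope
to `F x₁ - 𝔼 F x_{T+1} ≤ F x₁ - F*`. For the fixed comparator `η`, the same conditional means and
the conditional variance bound give `𝔼 g_{t,j} g'_{t,j} = 𝔼 (∂_j F x_t)²` and
`𝔼 g_{t,j}² ≤ σ_j² + 𝔼 (∂_j F x_t)²`, so `-𝔼 ℓ_t(η)` dominates the left-hand side up to
`(L / 2) ∑_j η_j² σ_j²` (this uses `L ≥ 0`, forced by smoothness when `d > 0`).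
-/

open MeasureTheory ProbabilityTheory
open scoped InnerProductSpace

theorem continuous_of_norm_sub_le_mul_norm_sub {E G : Type*} [SeminormedAddCommGroup E]
    [SeminormedAddCommGroup G] {f : E → G} {L : ℝ} (hf : ∀ y z, ‖f y - f z‖ ≤ L * ‖y - z‖) :
    Continuous f :=
  (LipschitzWith.of_dist_le' (by simpa only [dist_eq_norm] using hf)).continuous

theorem nonneg_of_norm_sub_le_mul_norm_sub {E G : Type*} [NormedAddCommGroup E] [Nontrivial E]
    [SeminormedAddCommGroup G] {f : E → G} {L : ℝ} (hf : ∀ y z, ‖f y - f z‖ ≤ L * ‖y - z‖) :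
    0 ≤ L := by
  obtain ⟨y, z, hyz⟩ := exists_pair_ne E
  exact nonneg_of_mul_nonneg_left ((norm_nonneg _).trans (hf y z))
    (norm_pos_iff.2 (sub_ne_zero.2 hyz))

section Descent
variable {E : Type*} [NormedAddCommGroup E] [InnerProductSpace ℝ E] [CompleteSpace E]
  {F : E → ℝ} {L : ℝ}

theorem descent_lemma (hdiff : Differentiable ℝ F)
    (hsmooth : ∀ y z, ‖gradient F y - gradient F z‖ ≤ L * ‖y - z‖) (a b : E) :
    F b ≤ F a + ⟪gradient F a, b - a⟫_ℝ + L / 2 * ‖b - a‖ ^ 2 := by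
  set v := b - a
  let φ : ℝ → ℝ := fun s => F (a + s • v) - s * ⟪gradient F a, v⟫_ℝ - L / 2 * s ^ 2 * ‖v‖ ^ 2
  have hφ : ∀ s, HasDerivAt φ
      (⟪gradient F (a + s • v), v⟫_ℝ - ⟪gradient F a, v⟫_ℝ - L * s * ‖v‖ ^ 2) s := by
    intro s
    have hline : HasDerivAt (fun s : ℝ => a + s • v) v s := by
      simpa using ((hasDerivAt_id s).smul_const v).const_add a
    have hF : HasDerivAt (fun s : ℝ => F (a + s • v)) ⟪gradient F (a + s • v), v⟫_ℝ s := by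
      simpa [Function.comp_def] using
        (hdiff (a + s • v)).hasGradientAt.hasFDerivAt.comp_hasDerivAt s hline
    exact ((hF.sub ((hasDerivAt_id' s).mul_const _)).sub
      (((hasDerivAt_pow 2 s).const_mul (L / 2)).mul_const _)).congr_deriv
      (by simp only [Nat.cast_ofNat, pow_one, Nat.add_one_sub_one]; ring)
  have hmono : AntitoneOn φ (Set.Ici 0) := by
    refine antitoneOn_of_hasDerivWithinAt_nonpos (convex_Ici 0)
      (fun s _ => (hφ s).continuousAt.continuousWithinAt)
      (fun s _ => (hφ s).hasDerivWithinAt) fun s hs => ?_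
    rw [interior_Ici, Set.mem_Ioi] at hs
    have hlip : ‖gradient F (a + s • v) - gradient F a‖ ≤ L * s * ‖v‖ := by
      simpa [norm_smul, abs_of_pos hs, mul_assoc] using hsmooth (a + s • v) a
    calc ⟪gradient F (a + s • v), v⟫_ℝ - ⟪gradient F a, v⟫_ℝ - L * s * ‖v‖ ^ 2
        = ⟪gradient F (a + s • v) - gradient F a, v⟫_ℝ - L * s * ‖v‖ ^ 2 := by
          rw [inner_sub_left]
      _ ≤ ‖gradient F (a + s • v) - gradient F a‖ * ‖v‖ - L * s * ‖v‖ ^ 2 := by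
          gcongr; exact real_inner_le_norm _ _
      _ ≤ 0 := by nlinarith [norm_nonneg v]
  have h := hmono Set.self_mem_Ici (Set.mem_Ici.2 zero_le_one) zero_le_one
  simp only [φ, v, one_smul, zero_smul, add_zero, one_mul, zero_mul, one_pow, sub_zero,
    add_sub_cancel, ne_eq, OfNat.ofNat_ne_zero, not_false_eq_true, zero_pow, mul_zero] at h
  linarith

end Descent

section ConditionalExpectation
variable {Ω : Type*} {m : MeasurableSpace Ω} [m₀ : MeasurableSpace Ω] {μ : Measure Ω}

theorem integral_mul_eq_integral_mul_of_condExp_ae_eq (hm : m ≤ m₀) [SigmaFinite (μ.trim hm)]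
    {c h φ : Ω → ℝ} (hc : StronglyMeasurable[m] c) (hh : Integrable h μ)
    (hch : Integrable (c * h) μ) (hφ : μ[h | m] =ᵐ[μ] φ) :
    ∫ ω, c ω * h ω ∂μ = ∫ ω, c ω * φ ω ∂μ := by
  rw [← integral_condExp hm]
  refine integral_congr_ae ?_
  filter_upwards [condExp_mul_of_stronglyMeasurable_left hc hch hh, hφ] with ω hpull hω
  exact hpull.trans (congrArg (c ω * ·) hω)

theorem integral_sq_le_of_condExp_sq_sub_le (hm : m ≤ m₀) [IsProbabilityMeasure μ]
    {G D : Ω → ℝ} {s : ℝ} (hG : MemLp G 2 μ) (hD : μ[G | m] =ᵐ[μ] D)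
    (hvar : μ[fun ω => (G ω - D ω) ^ 2 | m] ≤ᵐ[μ] fun _ => s) :
    ∫ ω, G ω ^ 2 ∂μ ≤ s + ∫ ω, D ω ^ 2 ∂μ := by
  have hcondVar : Var[G; μ | m] =ᵐ[μ] μ[fun ω => (G ω - D ω) ^ 2 | m] :=
    condExp_congr_ae (by filter_upwards [hD] with ω hω; simp [hω])
  have htotal : ∫ ω, Var[G; μ | m] ω ∂μ = ∫ ω, G ω ^ 2 ∂μ - ∫ ω, D ω ^ 2 ∂μ := by
    have hD2 : μ[G | m] ^ 2 =ᵐ[μ] fun ω => D ω ^ 2 := by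
      filter_upwards [hD] with ω hω; simp [hω]
    rw [integral_congr_ae (condVar_ae_eq_condExp_sq_sub_sq_condExp hm hG),
      integral_sub' (g := μ[G | m] ^ 2) integrable_condExp (hG.condExp one_le_two).integrable_sq,
      integral_condExp hm, integral_congr_ae hD2]
    rfl
  have hle : ∫ ω, Var[G; μ | m] ω ∂μ ≤ s := by
    calc ∫ ω, Var[G; μ | m] ω ∂μ ≤ ∫ _, s ∂μ :=
          integral_mono_ae integrable_condVar (integrable_const s) (hcondVar.trans_le hvar)
      _ = s := by simp
  linarith

theorem condExp_piLp_apply_ae_eq {ι : Type*} [Fintype ι] {f φ : Ω → EuclideanSpace ℝ ι}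
    (hf : Integrable f μ) (hφ : μ[f | m] =ᵐ[μ] φ) (j : ι) :
    μ[fun ω => f ω j | m] =ᵐ[μ] fun ω => φ ω j := by
  filter_upwards [(EuclideanSpace.proj j).comp_condExp_comm (m := m) hf, hφ] with ω hcomm hω
  rw [← hω]
  exact hcomm.symm

end ConditionalExpectation

theorem integral_sum_Icc_le_of_telescoping {Ω : Type*} [MeasurableSpace Ω] {μ : Measure Ω}
    {X Y : ℕ → Ω → ℝ} {a : ℕ → ℝ} {K : ℝ} {T : ℕ} (hT : 1 ≤ T)
    (hX : ∀ t ∈ Finset.Icc 1 T, Integrable (X t) μ)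
    (hY : ∀ t ∈ Finset.Icc 1 T, Integrable (Y t) μ)
    (hstep : ∀ t ∈ Finset.Icc 1 T, ∫ ω, X t ω ∂μ ≤ a t - a (t + 1) + ∫ ω, Y t ω ∂μ + K) :
    ∫ ω, ∑ t ∈ Finset.Icc 1 T, X t ω ∂μ ≤
      a 1 - a (T + 1) + ∫ ω, ∑ t ∈ Finset.Icc 1 T, Y t ω ∂μ + T * K := by
  rw [integral_finsetSum _ hX, integral_finsetSum _ hY]
  have hsum := Finset.sum_le_sum hstep
  have htelescope := Finset.sum_Icc_sub hT a
  simp only [Finset.sum_add_distrib, Finset.sum_sub_distrib, Finset.sum_const, Nat.card_Icc,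
    Nat.add_sub_cancel, nsmul_eq_mul] at hsum htelescope
  linarith

section SGD
variable {ι : Type*} [Fintype ι]

noncomputable def surrogateLoss (L : ℝ) (g g' : EuclideanSpace ℝ ι) (η : ι → ℝ) : ℝ :=
  ∑ j, (-(η j) * (g j * g' j) + L / 2 * (η j) ^ 2 * (g j) ^ 2)

theorem le_add_surrogateLoss_gradient {F : EuclideanSpace ℝ ι → ℝ} {L : ℝ}
    (hdiff : Differentiable ℝ F)
    (hsmooth : ∀ y z, ‖gradient F y - gradient F z‖ ≤ L * ‖y - z‖)
    {x x' g : EuclideanSpace ℝ ι} {η : ι → ℝ} (hstep : ∀ j, x' j = x j - η j * g j) :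
    F x' ≤ F x + surrogateLoss L g (gradient F x) η := by
  have hdisplacement : ∀ j, (x' - x) j = -(η j * g j) := fun j => by
    simp only [PiLp.sub_apply, hstep]; ring
  have h := descent_lemma hdiff hsmooth x x'
  rw [PiLp.inner_apply, EuclideanSpace.real_norm_sq_eq, Finset.mul_sum] at h
  simp only [hdisplacement, RCLike.inner_apply, conj_trivial] at h
  rw [add_assoc, ← Finset.sum_add_distrib] at h
  rw [surrogateLoss]
  convert h using 3 with j
  ring

section Expectation
variable {Ω : Type*} {m : MeasurableSpace Ω} [m₀ : MeasurableSpace Ω] {μ : Measure Ω}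
  {F : EuclideanSpace ℝ ι → ℝ} {x x' g g' : Ω → EuclideanSpace ℝ ι} {η : Ω → ι → ℝ}

theorem integrable_surrogateLoss (L : ℝ)
    (hηgg' : ∀ j, Integrable (fun ω => η ω j * (g ω j * g' ω j)) μ)
    (hηg2 : ∀ j, Integrable (fun ω => η ω j ^ 2 * g ω j ^ 2) μ) :
    Integrable (fun ω => surrogateLoss L (g ω) (g' ω) (η ω)) μ :=
  integrable_finsetSum _ fun j _ => ((hηgg' j).fun_neg.add ((hηg2 j).const_mul (L / 2))).congr
    (ae_of_all _ fun ω => by simp only [Pi.add_apply]; ring)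

theorem integral_surrogateLoss (L : ℝ)
    (hηgg' : ∀ j, Integrable (fun ω => η ω j * (g ω j * g' ω j)) μ)
    (hηg2 : ∀ j, Integrable (fun ω => η ω j ^ 2 * g ω j ^ 2) μ) :
    ∫ ω, surrogateLoss L (g ω) (g' ω) (η ω) ∂μ =
      ∑ j, (-∫ ω, η ω j * (g ω j * g' ω j) ∂μ + L / 2 * ∫ ω, η ω j ^ 2 * g ω j ^ 2 ∂μ) := by
  have hterm : ∀ j, (fun ω => -(η ω j) * (g ω j * g' ω j) + L / 2 * η ω j ^ 2 * g ω j ^ 2) =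
      fun ω => -(η ω j * (g ω j * g' ω j)) + L / 2 * (η ω j ^ 2 * g ω j ^ 2) :=
    fun j => funext fun ω => by ring
  have hint : ∀ j, Integrable
      (fun ω => -(η ω j) * (g ω j * g' ω j) + L / 2 * η ω j ^ 2 * g ω j ^ 2) μ := fun j => by
    rw [hterm]; exact (hηgg' j).fun_neg.add ((hηg2 j).const_mul _)
  simp only [surrogateLoss]
  rw [integral_finsetSum _ fun j _ => hint j]
  refine Finset.sum_congr rfl fun j _ => ?_
  rw [hterm, integral_add (hηgg' j).fun_neg ((hηg2 j).const_mul _), integral_neg,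
    integral_const_mul]

theorem integral_le_integral_add_integral_surrogateLoss [IsFiniteMeasure μ] {L : ℝ} (hm : m ≤ m₀)
    (hdiff : Differentiable ℝ F)
    (hsmooth : ∀ y z, ‖gradient F y - gradient F z‖ ≤ L * ‖y - z‖)
    (hx : StronglyMeasurable[m] x) (hη : StronglyMeasurable[m] η)
    (hg : AEStronglyMeasurable g μ)
    (hunb : μ[g | m] =ᵐ[μ] fun ω => gradient F (x ω))
    (hindep : ∀ j, μ[fun ω => g ω j * g' ω j | m] =ᵐ[μ] fun ω => (gradient F (x ω) j) ^ 2)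
    (hstep : ∀ ω j, x' ω j = x ω j - η ω j * g ω j)
    (hFx : Integrable (fun ω => F (x ω)) μ) (hFx' : Integrable (fun ω => F (x' ω)) μ)
    (hgg' : ∀ j, Integrable (fun ω => g ω j * g' ω j) μ)
    (hg2 : ∀ j, Integrable (fun ω => g ω j ^ 2) μ)
    (hηgg' : ∀ j, Integrable (fun ω => η ω j * (g ω j * g' ω j)) μ)
    (hηg2 : ∀ j, Integrable (fun ω => η ω j ^ 2 * g ω j ^ 2) μ)
    (hDL2 : ∀ j, MemLp (fun ω => gradient F (x ω) j) 2 μ) :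
    ∫ ω, F (x' ω) ∂μ ≤ ∫ ω, F (x ω) ∂μ + ∫ ω, surrogateLoss L (g ω) (g' ω) (η ω) ∂μ := by
  have hDmeas : ∀ j, StronglyMeasurable[m] fun ω => gradient F (x ω) j := fun j =>
    ((EuclideanSpace.proj j).continuous.comp
      (continuous_of_norm_sub_le_mul_norm_sub hsmooth)).comp_stronglyMeasurable hx
  have hηmeas : ∀ j, StronglyMeasurable[m] fun ω => η ω j := fun j =>
    (continuous_apply j).comp_stronglyMeasurable hη
  have hgL2 : ∀ j, MemLp (fun ω => g ω j) 2 μ := fun j =>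
    (memLp_two_iff_integrable_sq
      ((EuclideanSpace.proj j).continuous.comp_aestronglyMeasurable hg)).2 (hg2 j)
  have hηgL2 : ∀ j, MemLp (fun ω => η ω j * g ω j) 2 μ := fun j =>
    (memLp_two_iff_integrable_sq
      ((((hηmeas j).mono hm).aestronglyMeasurable.mul (hgL2 j).1))).2
      ((hηg2 j).congr (ae_of_all _ fun ω => by simp only [Pi.mul_apply]; ring))
  have hgcond : ∀ j, μ[fun ω => g ω j | m] =ᵐ[μ] fun ω => gradient F (x ω) j :=
    condExp_piLp_apply_ae_eq (Integrable.of_eval_piLp fun j => (hgL2 j).integrable one_le_two)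
      hunb
  have hηgD : ∀ j, Integrable (fun ω => η ω j * (g ω j * gradient F (x ω) j)) μ := fun j =>
    ((hηgL2 j).integrable_mul (hDL2 j)).congr
      (ae_of_all _ fun ω => by simp only [Pi.mul_apply]; ring)
  have hfirst_order : ∀ j, ∫ ω, η ω j * (g ω j * gradient F (x ω) j) ∂μ =
      ∫ ω, η ω j * (g ω j * g' ω j) ∂μ := fun j => by
    calc ∫ ω, η ω j * (g ω j * gradient F (x ω) j) ∂μ
        = ∫ ω, (η ω j * gradient F (x ω) j) * g ω j ∂μ := by congr with ω; ring
      _ = ∫ ω, (η ω j * gradient F (x ω) j) * gradient F (x ω) j ∂μ :=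
          integral_mul_eq_integral_mul_of_condExp_ae_eq hm ((hηmeas j).mul (hDmeas j))
            ((hgL2 j).integrable one_le_two)
            ((hηgD j).congr (ae_of_all _ fun ω => by simp only [Pi.mul_apply]; ring)) (hgcond j)
      _ = ∫ ω, η ω j * (gradient F (x ω) j) ^ 2 ∂μ := by congr with ω; ring
      _ = ∫ ω, η ω j * (g ω j * g' ω j) ∂μ :=
          (integral_mul_eq_integral_mul_of_condExp_ae_eq hm (hηmeas j) (hgg' j) (hηgg' j)
            (hindep j)).symm
  calc ∫ ω, F (x' ω) ∂μ
      ≤ ∫ ω, (F (x ω) + surrogateLoss L (g ω) (gradient F (x ω)) (η ω)) ∂μ :=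
        integral_mono hFx' (hFx.add (integrable_surrogateLoss L hηgD hηg2))
          fun ω => le_add_surrogateLoss_gradient hdiff hsmooth (hstep ω)
    _ = ∫ ω, F (x ω) ∂μ + ∫ ω, surrogateLoss L (g ω) (g' ω) (η ω) ∂μ := by
        rw [integral_add hFx (integrable_surrogateLoss L hηgD hηg2),
          integral_surrogateLoss L hηgD hηg2, integral_surrogateLoss L hηgg' hηg2]
        simp only [hfirst_order]

theorem sum_mul_integral_sq_le_neg_integral_surrogateLoss [IsProbabilityMeasure μ] {L : ℝ}
    {σ : ι → ℝ}
    (hm : m ≤ m₀) (hsmooth : ∀ y z, ‖gradient F y - gradient F z‖ ≤ L * ‖y - z‖)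
    (hg : AEStronglyMeasurable g μ)
    (hunb : μ[g | m] =ᵐ[μ] fun ω => gradient F (x ω))
    (hindep : ∀ j, μ[fun ω => g ω j * g' ω j | m] =ᵐ[μ] fun ω => (gradient F (x ω) j) ^ 2)
    (hvar : ∀ j, μ[fun ω => (g ω j - gradient F (x ω) j) ^ 2 | m] ≤ᵐ[μ] fun _ => σ j ^ 2)
    (hgg' : ∀ j, Integrable (fun ω => g ω j * g' ω j) μ)
    (hg2 : ∀ j, Integrable (fun ω => g ω j ^ 2) μ) (ηb : ι → ℝ) :
    ∑ j, (ηb j - L / 2 * ηb j ^ 2) * ∫ ω, (gradient F (x ω) j) ^ 2 ∂μ ≤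
      -∫ ω, surrogateLoss L (g ω) (g' ω) ηb ∂μ + L / 2 * ∑ j, ηb j ^ 2 * σ j ^ 2 := by
  have hgL2 : ∀ j, MemLp (fun ω => g ω j) 2 μ := fun j =>
    (memLp_two_iff_integrable_sq
      ((EuclideanSpace.proj j).continuous.comp_aestronglyMeasurable hg)).2 (hg2 j)
  have hgcond : ∀ j, μ[fun ω => g ω j | m] =ᵐ[μ] fun ω => gradient F (x ω) j :=
    condExp_piLp_apply_ae_eq (Integrable.of_eval_piLp fun j => (hgL2 j).integrable one_le_two)
      hunb
  have hcross : ∀ j, ∫ ω, g ω j * g' ω j ∂μ = ∫ ω, (gradient F (x ω) j) ^ 2 ∂μ := fun j => by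
    rw [← integral_condExp hm]
    exact integral_congr_ae (hindep j)
  have hsecond : ∀ j, ∫ ω, g ω j ^ 2 ∂μ ≤ σ j ^ 2 + ∫ ω, (gradient F (x ω) j) ^ 2 ∂μ :=
    fun j => integral_sq_le_of_condExp_sq_sub_le hm (hgL2 j) (hgcond j) (hvar j)
  rw [integral_surrogateLoss (η := fun _ => ηb) L (fun j => (hgg' j).const_mul _)
      (fun j => (hg2 j).const_mul _), ← Finset.sum_neg_distrib, Finset.mul_sum,
    ← Finset.sum_add_distrib]
  refine Finset.sum_le_sum fun j _ => ?_
  have : Nonempty ι := ⟨j⟩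
  have hL : 0 ≤ L := nonneg_of_norm_sub_le_mul_norm_sub hsmooth
  simp only [integral_const_mul, hcross j]
  nlinarith [mul_le_mul_of_nonneg_left (hsecond j) (by positivity : 0 ≤ L / 2 * ηb j ^ 2)]

theorem sgdol_step_inequality [IsProbabilityMeasure μ] {L : ℝ} {σ : ι → ℝ} (hm : m ≤ m₀)
    (hdiff : Differentiable ℝ F)
    (hsmooth : ∀ y z, ‖gradient F y - gradient F z‖ ≤ L * ‖y - z‖)
    (hx : StronglyMeasurable[m] x) (hη : StronglyMeasurable[m] η)
    (hg : AEStronglyMeasurable g μ)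
    (hunb : μ[g | m] =ᵐ[μ] fun ω => gradient F (x ω))
    (hindep : ∀ j, μ[fun ω => g ω j * g' ω j | m] =ᵐ[μ] fun ω => (gradient F (x ω) j) ^ 2)
    (hvar : ∀ j, μ[fun ω => (g ω j - gradient F (x ω) j) ^ 2 | m] ≤ᵐ[μ] fun _ => σ j ^ 2)
    (hstep : ∀ ω j, x' ω j = x ω j - η ω j * g ω j)
    (hFx : Integrable (fun ω => F (x ω)) μ) (hFx' : Integrable (fun ω => F (x' ω)) μ)
    (hgg' : ∀ j, Integrable (fun ω => g ω j * g' ω j) μ)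
    (hg2 : ∀ j, Integrable (fun ω => g ω j ^ 2) μ)
    (hηgg' : ∀ j, Integrable (fun ω => η ω j * (g ω j * g' ω j)) μ)
    (hηg2 : ∀ j, Integrable (fun ω => η ω j ^ 2 * g ω j ^ 2) μ)
    (hDL2 : ∀ j, MemLp (fun ω => gradient F (x ω) j) 2 μ) (ηb : ι → ℝ) :
    ∫ ω, ∑ j, (ηb j - L / 2 * ηb j ^ 2) * (gradient F (x ω) j) ^ 2 ∂μ ≤
      ∫ ω, F (x ω) ∂μ - ∫ ω, F (x' ω) ∂μ
        + ∫ ω, (surrogateLoss L (g ω) (g' ω) (η ω) - surrogateLoss L (g ω) (g' ω) ηb) ∂μ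
        + L / 2 * ∑ j, ηb j ^ 2 * σ j ^ 2 := by
  rw [integral_finsetSum _ fun j _ => ((hDL2 j).integrable_sq).const_mul _,
    integral_sub (integrable_surrogateLoss L hηgg' hηg2)
      (integrable_surrogateLoss (η := fun _ => ηb) L (fun j => (hgg' j).const_mul _)
        (fun j => (hg2 j).const_mul _))]
  simp only [integral_const_mul]
  linarith [integral_le_integral_add_integral_surrogateLoss hm hdiff hsmooth hx hη hg hunb hindep
      hstep hFx hFx' hgg' hg2 hηgg' hηg2 hDL2,
    sum_mul_integral_sq_le_neg_integral_surrogateLoss hm hsmooth hg hunb hindep hvar hgg' hg2 ηb]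

end Expectation
end SGD

theorem sgdol_per_coordinate_master_inequality_general {d : ℕ}
    {Ω : Type*} [m0 : MeasurableSpace Ω]
    (μ : Measure Ω) [IsProbabilityMeasure μ] (ℱ : Filtration ℕ m0)
    (F : EuclideanSpace ℝ (Fin d) → ℝ) (L Fstar : ℝ) (σ : Fin d → ℝ)
    (hdiff : Differentiable ℝ F)
    (hsmooth : ∀ y z, ‖gradient F y - gradient F z‖ ≤ L * ‖y - z‖)
    (hbdd : ∀ y, Fstar ≤ F y)
    (T : ℕ) (hT : 1 ≤ T)
    (x g g' : ℕ → Ω → EuclideanSpace ℝ (Fin d)) (η : ℕ → Ω → Fin d → ℝ)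
    (x1 : EuclideanSpace ℝ (Fin d)) (hx1 : ∀ ω, x 1 ω = x1)
    (hxmeas : ∀ t ∈ Finset.Icc 1 T, StronglyMeasurable[ℱ (t - 1)] (x t))
    (hηmeas : ∀ t ∈ Finset.Icc 1 T, StronglyMeasurable[ℱ (t - 1)] (η t))
    (hgmeas : ∀ t ∈ Finset.Icc 1 T, StronglyMeasurable[ℱ t] (g t))
    (hunb : ∀ t ∈ Finset.Icc 1 T,
      μ[g t | ℱ (t - 1)] =ᵐ[μ] fun ω => gradient F (x t ω))
    (hindep : ∀ t ∈ Finset.Icc 1 T, ∀ j,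
      μ[(fun ω => g t ω j * g' t ω j) | ℱ (t - 1)]
        =ᵐ[μ] fun ω => (gradient F (x t ω) j) ^ 2)
    (hvar : ∀ t ∈ Finset.Icc 1 T, ∀ j,
      μ[(fun ω => (g t ω j - gradient F (x t ω) j) ^ 2) | ℱ (t - 1)]
        ≤ᵐ[μ] fun _ => (σ j) ^ 2)
    (hupdate : ∀ t ∈ Finset.Icc 1 T, ∀ ω, ∀ j,
      x (t + 1) ω j = x t ω j - η t ω j * g t ω j)
    (hintF : ∀ t ∈ Finset.Icc 1 (T + 1), Integrable (fun ω => F (x t ω)) μ)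
    (hint1 : ∀ t ∈ Finset.Icc 1 T, ∀ j, Integrable (fun ω => g t ω j * g' t ω j) μ)
    (hint2 : ∀ t ∈ Finset.Icc 1 T, ∀ j, Integrable (fun ω => (g t ω j) ^ 2) μ)
    (hint3 : ∀ t ∈ Finset.Icc 1 T, ∀ j,
      Integrable (fun ω => η t ω j * (g t ω j * g' t ω j)) μ)
    (hint4 : ∀ t ∈ Finset.Icc 1 T, ∀ j,
      Integrable (fun ω => (η t ω j) ^ 2 * (g t ω j) ^ 2) μ)
    (hint5 : ∀ t ∈ Finset.Icc 1 T, Integrable (fun ω => ‖gradient F (x t ω)‖ ^ 2) μ)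
    (ηb : Fin d → ℝ) :
    (∫ ω, ∑ t ∈ Finset.Icc 1 T, ∑ j,
        (ηb j - L / 2 * (ηb j) ^ 2) * (gradient F (x t ω) j) ^ 2 ∂μ) ≤
      F x1 - Fstar
      + (∫ ω, ∑ t ∈ Finset.Icc 1 T,
          ((∑ j, (-(η t ω j) * (g t ω j * g' t ω j)
              + L / 2 * (η t ω j) ^ 2 * (g t ω j) ^ 2))
            - (∑ j, (-(ηb j) * (g t ω j * g' t ω j)
              + L / 2 * (ηb j) ^ 2 * (g t ω j) ^ 2))) ∂μ)
      + L * T / 2 * ∑ j, (ηb j) ^ 2 * (σ j) ^ 2 := by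
  have hgAE : ∀ t ∈ Finset.Icc 1 T, AEStronglyMeasurable (g t) μ := fun t ht =>
    ((hgmeas t ht).mono (ℱ.le t)).aestronglyMeasurable
  have hDL2 : ∀ t ∈ Finset.Icc 1 T, ∀ j, MemLp (fun ω => gradient F (x t ω) j) 2 μ :=
    fun t ht => ((memLp_two_iff_integrable_sq_norm
      (((continuous_of_norm_sub_le_mul_norm_sub hsmooth).comp_stronglyMeasurable
        (hxmeas t ht)).mono (ℱ.le _)).aestronglyMeasurable).2 (hint5 t ht)).eval_piLp
  have hmem : ∀ t ∈ Finset.Icc 1 T, t ∈ Finset.Icc 1 (T + 1) ∧ t + 1 ∈ Finset.Icc 1 (T + 1) :=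
    fun t ht => by simp only [Finset.mem_Icc] at ht ⊢; omega
  have hFstar : Fstar ≤ ∫ ω, F (x (T + 1) ω) ∂μ := by
    simpa using integral_mono (integrable_const Fstar) (hintF (T + 1) (by simp)) fun ω => hbdd _
  have hsum := integral_sum_Icc_le_of_telescoping (μ := μ) (a := fun t => ∫ ω, F (x t ω) ∂μ) hT
    (fun t ht => integrable_finsetSum _ fun j _ => ((hDL2 t ht j).integrable_sq).const_mul _)
    (fun t ht => (integrable_surrogateLoss L (hint3 t ht) (hint4 t ht)).sub'
      (integrable_surrogateLoss (η := fun _ => ηb) L (fun j => (hint1 t ht j).const_mul _)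
        (fun j => (hint2 t ht j).const_mul _)))
    fun t ht => sgdol_step_inequality (ℱ.le _) hdiff hsmooth (hxmeas t ht) (hηmeas t ht)
      (hgAE t ht) (hunb t ht) (hindep t ht) (hvar t ht) (hupdate t ht) (hintF t (hmem t ht).1)
      (hintF (t + 1) (hmem t ht).2) (hint1 t ht) (hint2 t ht) (hint3 t ht) (hint4 t ht)
      (hDL2 t ht) ηb
  simp only [hx1, integral_const, probReal_univ, one_smul] at hsum
  simp only [← surrogateLoss.eq_1]
  linarith

/-- Per-coordinate SGDOL master inequality. -/
theorem sgdol_per_coordinate_master_inequality {d : ℕ}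
    {Ω : Type*} [m0 : MeasurableSpace Ω]
    (μ : Measure Ω) [IsProbabilityMeasure μ] (ℱ : Filtration ℕ m0)
    (F : EuclideanSpace ℝ (Fin d) → ℝ) (L Fstar : ℝ) (σ : Fin d → ℝ)
    (hdiff : Differentiable ℝ F)
    (hsmooth : ∀ y z, ‖gradient F y - gradient F z‖ ≤ L * ‖y - z‖)
    (hbdd : ∀ y, Fstar ≤ F y)
    (T : ℕ) (hT : 1 ≤ T)
    (x g g' : ℕ → Ω → EuclideanSpace ℝ (Fin d)) (η : ℕ → Ω → Fin d → ℝ)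
    (x1 : EuclideanSpace ℝ (Fin d)) (hx1 : ∀ ω, x 1 ω = x1)
    (hxmeas : ∀ t ∈ Finset.Icc 1 T, StronglyMeasurable[ℱ (t - 1)] (x t))
    (hηmeas : ∀ t ∈ Finset.Icc 1 T, StronglyMeasurable[ℱ (t - 1)] (η t))
    (hηnonneg : ∀ t ω j, 0 ≤ η t ω j)
    (hgmeas : ∀ t ∈ Finset.Icc 1 T, StronglyMeasurable[ℱ t] (g t))
    (hg'meas : ∀ t ∈ Finset.Icc 1 T, StronglyMeasurable[ℱ t] (g' t))
    (hunb : ∀ t ∈ Finset.Icc 1 T,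
      μ[g t | ℱ (t - 1)] =ᵐ[μ] fun ω => gradient F (x t ω))
    (hunb' : ∀ t ∈ Finset.Icc 1 T,
      μ[g' t | ℱ (t - 1)] =ᵐ[μ] fun ω => gradient F (x t ω))
    (hindep : ∀ t ∈ Finset.Icc 1 T, ∀ j,
      μ[(fun ω => g t ω j * g' t ω j) | ℱ (t - 1)]
        =ᵐ[μ] fun ω => (gradient F (x t ω) j) ^ 2)
    (hvar : ∀ t ∈ Finset.Icc 1 T, ∀ j,
      μ[(fun ω => (g t ω j - gradient F (x t ω) j) ^ 2) | ℱ (t - 1)]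
        ≤ᵐ[μ] fun _ => (σ j) ^ 2)
    (hupdate : ∀ t ∈ Finset.Icc 1 T, ∀ ω, ∀ j,
      x (t + 1) ω j = x t ω j - η t ω j * g t ω j)
    (hintF : ∀ t ∈ Finset.Icc 1 (T + 1), Integrable (fun ω => F (x t ω)) μ)
    (hint1 : ∀ t ∈ Finset.Icc 1 T, ∀ j, Integrable (fun ω => g t ω j * g' t ω j) μ)
    (hint2 : ∀ t ∈ Finset.Icc 1 T, ∀ j, Integrable (fun ω => (g t ω j) ^ 2) μ)
    (hint3 : ∀ t ∈ Finset.Icc 1 T, ∀ j,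
      Integrable (fun ω => η t ω j * (g t ω j * g' t ω j)) μ)
    (hint4 : ∀ t ∈ Finset.Icc 1 T, ∀ j,
      Integrable (fun ω => (η t ω j) ^ 2 * (g t ω j) ^ 2) μ)
    (hint5 : ∀ t ∈ Finset.Icc 1 T, Integrable (fun ω => ‖gradient F (x t ω)‖ ^ 2) μ)
    (ηb : Fin d → ℝ) (hηb : ∀ j, 0 < ηb j) :
    (∫ ω, ∑ t ∈ Finset.Icc 1 T, ∑ j,
        (ηb j - L / 2 * (ηb j) ^ 2) * (gradient F (x t ω) j) ^ 2 ∂μ) ≤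
      F x1 - Fstar
      + (∫ ω, ∑ t ∈ Finset.Icc 1 T,
          ((∑ j, (-(η t ω j) * (g t ω j * g' t ω j)
              + L / 2 * (η t ω j) ^ 2 * (g t ω j) ^ 2))
            - (∑ j, (-(ηb j) * (g t ω j * g' t ω j)
              + L / 2 * (ηb j) ^ 2 * (g t ω j) ^ 2))) ∂μ)
      + L * T / 2 * ∑ j, (ηb j) ^ 2 * (σ j) ^ 2 :=
  sgdol_per_coordinate_master_inequality_general (m0 := m0) μ ℱ F L Fstar σ hdiff hsmooth hbdd T hT
    x g g' η x1 hx1 hxmeas hηmeas hgmeas hunb hindep hvar hupdate hintF hint1 hint2 hint3 hint4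
    hint5 ηb
end

section
/- Let T ≥ 3 be an integer, let β be a real number with 1 ≤ β < T, and set α = (β/T)^{1/T}. Then α ≥ 0.69 and α^{T+1}/(1 − α) ≤ 2β/ln(T/β). -/
/-!
Writing `L = ln(T/β)`, we have `α = exp(-L/T)` and `α^T = β/T`. The inequality `e^t ≥ 1 + t`
gives `1 - e^{-t} ≥ t e^{-t}`, i.e. `α/(1 - α) ≤ T/L`, hence `α^{T+1}/(1 - α) ≤ β/L`, half the
claimed bound. The lower bound `α ≥ 0.69` amounts to `0.69^T ≤ β/T`, which follows from
`0.69^T · T ≤ 1` for `T ≥ 3`.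
-/

open Real

lemma zero_point_69_pow_mul_le_one {n : ℕ} (hn : 3 ≤ n) : (0.69 : ℝ) ^ n * n ≤ 1 := by
  induction n, hn using Nat.le_induction with
  | base => norm_num
  | succ n hn ih =>
    have hn' : (3 : ℝ) ≤ n := by exact_mod_cast hn
    have hpow : (0 : ℝ) ≤ 0.69 ^ n := by positivity
    push_cast
    rw [pow_succ]
    nlinarith

lemma exp_neg_div_one_sub_exp_neg_le {t : ℝ} (ht : 0 < t) : exp (-t) / (1 - exp (-t)) ≤ t⁻¹ := by
  have hpos : 0 < 1 - exp (-t) := sub_pos.2 (exp_lt_one_iff.2 (neg_lt_zero.2 ht))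
  have key : t * exp (-t) ≤ 1 - exp (-t) := by
    have h := mul_le_mul_of_nonneg_left (add_one_le_exp t) (exp_pos (-t)).le
    rw [← exp_add, neg_add_cancel, exp_zero] at h
    linarith
  rw [div_le_iff₀ hpos, inv_mul_eq_div, le_div_iff₀ ht]
  linarith

lemma rpow_inv_div_one_sub_rpow_inv_le {x r : ℝ} (hx0 : 0 < x) (hx1 : x < 1) (hr : 0 < r) :
    x ^ r⁻¹ / (1 - x ^ r⁻¹) ≤ r / log x⁻¹ := by
  have hlog : 0 < log x⁻¹ := log_pos ((one_lt_inv₀ hx0).2 hx1)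
  have hexp : x ^ r⁻¹ = exp (-(log x⁻¹ / r)) := by
    rw [rpow_def_of_pos hx0, log_inv, neg_div, neg_neg, div_eq_mul_inv]
  rw [hexp, ← inv_div (log x⁻¹)]
  exact exp_neg_div_one_sub_exp_neg_le (div_pos hlog hr)

/-- Properties of `α = (β/T)^(1/T)`: it is at least `0.69` and
`α^(T+1)/(1-α) ≤ 2β / ln(T/β)`. -/
theorem exp_stepsize_base_bounds (T : ℕ) (hT : 3 ≤ T) (β : ℝ)
    (hβ1 : 1 ≤ β) (hβT : β < T) :
    0.69 ≤ (β / T) ^ ((T : ℝ)⁻¹) ∧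
      ((β / T) ^ ((T : ℝ)⁻¹)) ^ (T + 1) / (1 - (β / T) ^ ((T : ℝ)⁻¹)) ≤
        2 * β / Real.log (T / β) := by
  have hT0 : (0 : ℝ) < T := by positivity
  have hβ0 : 0 < β := by linarith
  have hx0 : 0 < β / T := by positivity
  have hx1 : β / T < 1 := (div_lt_one hT0).2 hβT
  have hlog : 0 < log (T / β) := log_pos ((one_lt_div hβ0).2 hβT)
  set α := (β / T) ^ ((T : ℝ)⁻¹)
  have hαT : α ^ T = β / T := rpow_inv_natCast_pow hx0.le (by omega)
  constructor
  · rw [le_rpow_inv_iff_of_pos (by norm_num) hx0.le hT0, rpow_natCast,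
      le_div_iff₀ hT0]
    linarith [zero_point_69_pow_mul_le_one hT]
  · calc α ^ (T + 1) / (1 - α) = β / T * (α / (1 - α)) := by rw [pow_succ, hαT, mul_div_assoc]
      _ ≤ β / T * (T / log (β / T)⁻¹) :=
        mul_le_mul_of_nonneg_left (rpow_inv_div_one_sub_rpow_inv_le hx0 hx1 hT0) hx0.le
      _ = β / log (T / β) := by rw [inv_div]; field_simp
      _ ≤ 2 * β / log (T / β) := by gcongr; linarith
end

section
/- Let a ≥ 0 and b > 0 be real numbers and T ≥ 0 an integer. Then Σ_{t=0}^T exp(−bt)·t^a ≤ 2·exp(−a)·(a/b)^a + Γ(a+1)/b^{a+1}, where Γ is the Gamma function (with the conventions 0⁰ = 1, so the term at t = 0 is 1 when a = 0 and 0 when a > 0, and (a/b)^a = 1 when a = 0). -/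
/-!
The summand `f t = exp (-b t) t ^ a` is unimodal: `log f` is concave, so `f` increases up to
`a / b` and decreases afterwards, with peak value `exp (-a) (a / b) ^ a`. With `m = ⌊a / b⌋`,
each term `f t` with `t < m` is at most `∫_t^{t+1} f`, each term with `t ≥ m + 2` is at most
`∫_{t-1}^t f`, and the two terms at `m` and `m + 1` are at most the peak value. The integrals
cover disjoint pieces of `(0, ∞)`, on which `∫ f = Γ(a + 1) / b ^ (a + 1)`.
-/

open MeasureTheory Set Real

section Unimodal

variable {f : ℝ → ℝ}

theorem intervalIntegral_add_intervalIntegral_le_integral_Ioi {u v w : ℝ}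
    (hu : 0 ≤ u) (huv : u ≤ v) (hvw : v ≤ w) (hf0 : ∀ x, 0 ≤ x → 0 ≤ f x)
    (hf : IntegrableOn f (Ioi 0)) :
    (∫ x in (0 : ℝ)..u, f x) + ∫ x in v..w, f x ≤ ∫ x in Ioi 0, f x := by
  have hII : ∀ s t : ℝ, 0 ≤ s → s ≤ t → IntervalIntegrable f volume s t := fun s t hs hst =>
    (intervalIntegrable_iff_integrableOn_Ioc_of_le hst).2
      (hf.mono_set fun x hx => hs.trans_lt hx.1)
  have hgap : 0 ≤ ∫ x in u..v, f x :=
    intervalIntegral.integral_nonneg huv fun x hx => hf0 x (hu.trans hx.1)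
  have hwhole : ∫ x in (0 : ℝ)..w, f x ≤ ∫ x in Ioi 0, f x := by
    rw [intervalIntegral.integral_of_le (hu.trans (huv.trans hvw))]
    refine setIntegral_mono_set hf ?_ Ioc_subset_Ioi_self.eventuallyLE
    filter_upwards [ae_restrict_mem measurableSet_Ioi] with x hx using hf0 x hx.le
  rw [← intervalIntegral.integral_add_adjacent_intervals (hII 0 u le_rfl hu)
    (hII u w hu (huv.trans hvw)), ← intervalIntegral.integral_add_adjacent_intervals
    (hII u v hu huv) (hII v w (hu.trans huv) hvw)] at hwhole
  linarith

theorem sum_range_le_add_integral_Ioi_of_monotoneOn_of_antitoneOn (m n : ℕ)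
    (hmono : MonotoneOn f (Icc 0 m)) (hanti : AntitoneOn f (Ici ((m : ℝ) + 1)))
    (hf0 : ∀ x, 0 ≤ x → 0 ≤ f x) (hf : IntegrableOn f (Ioi 0)) :
    ∑ t ∈ Finset.range n, f t ≤ f m + f (m + 1) + ∫ x in Ioi 0, f x := by
  have hleft : ∑ t ∈ Finset.range m, f t ≤ ∫ x in (0 : ℝ)..m, f x := by
    simpa using MonotoneOn.sum_le_integral (x₀ := 0) (a := m) (by rwa [zero_add])
  have hright : ∑ t ∈ Finset.range n, f ↑(m + 2 + t) ≤ ∫ x in (m + 1 : ℝ)..m + 1 + n, f x := by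
    convert (hanti.mono Icc_subset_Ici_self).sum_le_integral using 3 with t
    push_cast
    ring
  have hints := intervalIntegral_add_intervalIntegral_le_integral_Ioi (Nat.cast_nonneg (α := ℝ) m)
    (by linarith : (m : ℝ) ≤ m + 1) (by simp : (m + 1 : ℝ) ≤ m + 1 + n) hf0 hf
  calc ∑ t ∈ Finset.range n, f t ≤ ∑ t ∈ Finset.range (m + 2 + n), f t :=
        Finset.sum_le_sum_of_subset_of_nonneg (Finset.range_subset_range.2 (by omega))
          fun t _ _ => hf0 t t.cast_nonneg
    _ = ∑ t ∈ Finset.range m, f t + (f m + f (m + 1)) + ∑ t ∈ Finset.range n, f ↑(m + 2 + t) := by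
        simp [Finset.sum_range_add, Finset.sum_range_succ, add_assoc]
    _ ≤ f m + f (m + 1) + ∫ x in Ioi 0, f x := by linarith

end Unimodal

section ExpNegMulRpow

variable {a b : ℝ}

/-- The tangent-line bound of the concave function `log (exp (-b x) x ^ a)` at `y`. -/
theorem exp_neg_mul_mul_rpow_le_mul_exp {x y : ℝ} (ha : 0 ≤ a) (hx : 0 < x) (hy : 0 < y) :
    exp (-b * x) * x ^ a ≤ exp (-b * y) * y ^ a * exp ((a / y - b) * (x - y)) := by
  have hlog : log x - log y ≤ x / y - 1 := by
    rw [← log_div hx.ne' hy.ne']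
    exact log_le_sub_one_of_pos (div_pos hx hy)
  have hslope : a * (x / y - 1) = a / y * (x - y) := by field_simp
  rw [rpow_def_of_pos hx, rpow_def_of_pos hy, ← exp_add, ← exp_add, ← exp_add, exp_le_exp]
  linarith [mul_le_mul_of_nonneg_left hlog ha]

theorem monotoneOn_exp_neg_mul_mul_rpow (ha : 0 ≤ a) (hb : 0 < b) :
    MonotoneOn (fun x => exp (-b * x) * x ^ a) (Icc 0 (a / b)) := by
  rintro x ⟨hx, -⟩ y ⟨-, hyc⟩ hxy
  rcases hx.eq_or_lt with rfl | hx
  · rcases ha.eq_or_lt with rfl | ha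
    · simp [le_antisymm (by simpa using hyc) (hxy : 0 ≤ y)]
    · simp only [zero_rpow ha.ne', mul_zero]
      positivity
  · have hy := hx.trans_le hxy
    have hslope : 0 ≤ a / y - b := sub_nonneg.2 ((le_div_iff₀ hy).2 ((le_div_iff₀' hb).1 hyc))
    exact (exp_neg_mul_mul_rpow_le_mul_exp ha hx hy).trans (mul_le_of_le_one_right
      (by positivity) (exp_le_one_iff.2 (mul_nonpos_of_nonneg_of_nonpos hslope (by linarith))))

theorem antitoneOn_exp_neg_mul_mul_rpow (ha : 0 ≤ a) (hb : 0 < b) :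
    AntitoneOn (fun x => exp (-b * x) * x ^ a) (Ici (a / b)) := by
  rintro x (hcx : a / b ≤ x) y - hxy
  rcases ((div_nonneg ha hb.le).trans hcx).eq_or_lt with rfl | hx
  · obtain rfl : a = 0 := le_antisymm (by simpa using (div_le_iff₀ hb).1 hcx) ha
    simpa using mul_nonneg hb.le (hxy : 0 ≤ y)
  · have hy := hx.trans_le hxy
    have hslope : a / x - b ≤ 0 := sub_nonpos.2 ((div_le_iff₀ hx).2 ((div_le_iff₀' hb).1 hcx))
    exact (exp_neg_mul_mul_rpow_le_mul_exp ha hy hx).trans (mul_le_of_le_one_right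
      (by positivity) (exp_le_one_iff.2 (mul_nonpos_of_nonpos_of_nonneg hslope (by linarith))))

theorem exp_neg_mul_mul_rpow_le (ha : 0 ≤ a) (hb : 0 < b) {x : ℝ} (hx : 0 ≤ x) :
    exp (-b * x) * x ^ a ≤ exp (-a) * (a / b) ^ a := by
  have hpeak : exp (-a) = exp (-b * (a / b)) := by field_simp
  rw [hpeak]
  rcases le_total x (a / b) with hxc | hcx
  · exact monotoneOn_exp_neg_mul_mul_rpow ha hb ⟨hx, hxc⟩ ⟨div_nonneg ha hb.le, le_rfl⟩ hxc
  · exact antitoneOn_exp_neg_mul_mul_rpow ha hb self_mem_Ici hcx hcx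

theorem integral_exp_neg_mul_mul_rpow_Ioi (ha : -1 < a) (hb : 0 < b) :
    ∫ x in Ioi 0, exp (-b * x) * x ^ a = Gamma (a + 1) / b ^ (a + 1) := by
  have h := integral_rpow_mul_exp_neg_mul_Ioi (a := a + 1) (by linarith) hb
  rw [add_sub_cancel_right, one_div, inv_rpow hb.le, ← div_eq_inv_mul] at h
  simpa only [mul_comm (exp _), neg_mul] using h

theorem integrableOn_exp_neg_mul_mul_rpow_Ioi (ha : -1 < a) (hb : 0 < b) :
    IntegrableOn (fun x => exp (-b * x) * x ^ a) (Ioi 0) :=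
  .of_integral_ne_zero <| by
    rw [integral_exp_neg_mul_mul_rpow_Ioi ha hb]
    exact (div_pos (Gamma_pos_of_pos (by linarith)) (rpow_pos_of_pos hb _)).ne'

end ExpNegMulRpow

/-- Bound on `∑_{t=0}^T exp(-bt) t^a` via the Gamma function. -/
theorem sum_exp_neg_mul_pow_le (a b : ℝ) (ha : 0 ≤ a) (hb : 0 < b) (T : ℕ) :
    ∑ t ∈ Finset.range (T + 1), Real.exp (-b * t) * (t : ℝ) ^ a ≤
      2 * Real.exp (-a) * (a / b) ^ a + Real.Gamma (a + 1) / b ^ (a + 1) := by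
  set m := ⌊a / b⌋₊
  have hm : (m : ℝ) ≤ a / b := Nat.floor_le (div_nonneg ha hb.le)
  have hm1 : a / b ≤ m + 1 := (Nat.lt_floor_add_one _).le
  have hsum := sum_range_le_add_integral_Ioi_of_monotoneOn_of_antitoneOn m (T + 1)
    ((monotoneOn_exp_neg_mul_mul_rpow ha hb).mono (Icc_subset_Icc_right hm))
    ((antitoneOn_exp_neg_mul_mul_rpow ha hb).mono (Ici_subset_Ici.2 hm1))
    (fun x hx => by positivity) (integrableOn_exp_neg_mul_mul_rpow_Ioi (by linarith) hb)
  rw [integral_exp_neg_mul_mul_rpow_Ioi (by linarith) hb] at hsum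
  linarith [exp_neg_mul_mul_rpow_le ha hb m.cast_nonneg,
    exp_neg_mul_mul_rpow_le ha hb (by positivity : (0 : ℝ) ≤ m + 1)]
end

section
/- Let K ⊂ ℝ^d be a product of closed bounded intervals (a hypercube) with ‖x − y‖_∞ ≤ D_∞ for all x, y ∈ K, and let F: ℝ^d → ℝ be differentiable and convex. Run per-coordinate AdaGrad: starting from x₁ ∈ K, with η = D_∞/√2, set η_{t,j} = η/√(Σ_{i=1}^t (∂_j F(x_i))²) (assuming Σ_{i=1}^t (∂_j F(x_i))² > 0 for all t, j) and x_{t+1} = Π_K(x_t − η_t ∘ ∇F(x_t)), where ∘ is the coordinate-wise product and Π_K the Euclidean projection onto K. Then for any x ∈ K: Σ_{t=1}^T (F(x_t) − F(x)) ≤ √(2 d D_∞² · Σ_{t=1}^T ‖∇F(x_t)‖₂²). -/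
/-!
Convexity bounds the regret term `F(xₜ) - F(y)` by `∑ⱼ gₜⱼ (xₜⱼ - yⱼ)` with `gₜ = ∇F(xₜ)`, and the
Euclidean projection onto a box is coordinatewise clamping, so each coordinate runs a scalar
projected gradient method with step `η / sₜ`, where `sₜ = √(g₁² + ⋯ + gₜ²)`. Expanding
`(x_{t+1} - y)² ≤ (xₜ - y - η gₜ / sₜ)²` gives `gₜ aₜ ≤ sₜ/(2η) (aₜ² - a_{t+1}²) + η/(2sₜ) gₜ²`
with `aₜ = xₜ - y`. Since `sₜ` is nondecreasing and `aₜ² ≤ D²`, the first sum telescopes to at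
most `D² s_T / (2η)`; the second is at most `η s_T` because `gₜ² / sₜ ≤ 2 (sₜ - s_{t-1})`.
For `η = D/√2` each coordinate contributes `√2 D s_T`, and Cauchy–Schwarz over the `d`
coordinates turns `∑ⱼ s_{T,j}` into `√(d ∑ₜ ‖gₜ‖²)`.
-/

open Finset Real

theorem ConvexOn.fderiv_sub_le {E : Type*} [NormedAddCommGroup E] [NormedSpace ℝ E] {f : E → ℝ}
    (hf : ConvexOn ℝ Set.univ f) {p : E} (hp : DifferentiableAt ℝ f p) (q : E) :
    fderiv ℝ f p (q - p) ≤ f q - f p := by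
  set ℓ : ℝ →ᵃ[ℝ] E := AffineMap.lineMap p q
  have hline : ConvexOn ℝ Set.univ (f ∘ ℓ) := hf.comp_affineMap ℓ
  have hderiv : HasDerivAt (f ∘ ℓ) (fderiv ℝ f p (q - p)) 0 := by
    have hp' : HasFDerivAt f (fderiv ℝ f p) (ℓ 0) := by simpa [ℓ] using hp.hasFDerivAt
    simpa using hp'.comp_hasDerivAt (0 : ℝ) AffineMap.hasDerivAt_lineMap
  simpa [slope, ℓ] using
    hline.le_slope_of_hasDerivAt (Set.mem_univ 0) (Set.mem_univ 1) one_pos hderiv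

theorem ConvexOn.inner_gradient_sub_le {E : Type*} [NormedAddCommGroup E] [InnerProductSpace ℝ E]
    [CompleteSpace E] {f : E → ℝ} (hf : ConvexOn ℝ Set.univ f) {p : E}
    (hp : DifferentiableAt ℝ f p) (q : E) :
    inner ℝ (gradient f p) (q - p) ≤ f q - f p := by
  rw [gradient, InnerProductSpace.toDual_symm_apply]
  exact hf.fderiv_sub_le hp q

theorem ConvexOn.sub_le_sum_gradient_mul {ι : Type*} [Fintype ι] {f : EuclideanSpace ℝ ι → ℝ}
    (hf : ConvexOn ℝ Set.univ f) {p : EuclideanSpace ℝ ι} (hp : DifferentiableAt ℝ f p)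
    (q : EuclideanSpace ℝ ι) : f p - f q ≤ ∑ j, gradient f p j * (p j - q j) := by
  have h := hf.inner_gradient_sub_le hp q
  rw [← neg_sub p q, inner_neg_right, PiLp.inner_apply] at h
  simp only [PiLp.sub_apply, RCLike.inner_apply, conj_trivial, mul_comm (p _ - q _)] at h
  linarith

section Clamp

variable {lo hi u v : ℝ}

theorem sq_clamp_sub_le (hu : u ∈ Set.Icc lo hi) :
    (max lo (min hi v) - v) ^ 2 ≤ (u - v) ^ 2 := by
  obtain ⟨hlo, hhi⟩ := hu
  rcases le_total v lo with h | h
  · rw [min_eq_right (h.trans (hlo.trans hhi)), max_eq_left h]; nlinarith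
  rcases le_total v hi with h' | h'
  · rw [min_eq_right h', max_eq_right h]; simpa using sq_nonneg (u - v)
  · rw [min_eq_left h', max_eq_right (hlo.trans hhi)]; nlinarith

theorem eq_clamp_of_sq_sub_le (hu : u ∈ Set.Icc lo hi)
    (h : (u - v) ^ 2 ≤ (max lo (min hi v) - v) ^ 2) : u = max lo (min hi v) := by
  obtain ⟨hlo, hhi⟩ := hu
  rcases le_total v lo with hv | hv
  · rw [min_eq_right (hv.trans (hlo.trans hhi)), max_eq_left hv] at *; nlinarith
  rcases le_total v hi with hv' | hv'
  · rw [min_eq_right hv', max_eq_right hv] at *; nlinarith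
  · rw [min_eq_left hv', max_eq_right (hlo.trans hhi)] at *; nlinarith

theorem sq_clamp_sub_le_sq_sub (hu : u ∈ Set.Icc lo hi) :
    (max lo (min hi v) - u) ^ 2 ≤ (v - u) ^ 2 := by
  obtain ⟨hlo, hhi⟩ := hu
  rcases le_total v lo with h | h
  · rw [min_eq_right (h.trans (hlo.trans hhi)), max_eq_left h]; nlinarith
  rcases le_total v hi with h' | h'
  · rw [min_eq_right h', max_eq_right h]
  · rw [min_eq_left h', max_eq_right (hlo.trans hhi)]; nlinarith

end Clamp

theorem EuclideanSpace.apply_eq_clamp_of_forall_norm_sub_le {ι : Type*} [Fintype ι]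
    {lo hi : ι → ℝ} {p z : EuclideanSpace ℝ ι} (hp : ∀ j, p j ∈ Set.Icc (lo j) (hi j))
    (hmin : ∀ w : EuclideanSpace ℝ ι, (∀ j, w j ∈ Set.Icc (lo j) (hi j)) → ‖p - z‖ ≤ ‖w - z‖)
    (j : ι) : p j = max (lo j) (min (hi j) (z j)) := by
  set c : EuclideanSpace ℝ ι := WithLp.toLp 2 fun j => max (lo j) (min (hi j) (z j))
  have hc : ∀ j, c j ∈ Set.Icc (lo j) (hi j) := fun j =>
    ⟨le_max_left _ _, max_le ((hp j).1.trans (hp j).2) (min_le_left _ _)⟩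
  have hcoord : ∀ j ∈ univ, (c j - z j) ^ 2 ≤ (p j - z j) ^ 2 := fun j _ => sq_clamp_sub_le (hp j)
  have hsum : ∑ j, (p j - z j) ^ 2 ≤ ∑ j, (c j - z j) ^ 2 := by
    simpa [EuclideanSpace.real_norm_sq_eq] using pow_le_pow_left₀ (norm_nonneg _) (hmin c hc) 2
  have heq := (sum_eq_sum_iff_of_le hcoord).1 (le_antisymm (sum_le_sum hcoord) hsum) j (mem_univ j)
  exact eq_clamp_of_sq_sub_le (hp j) heq.ge

theorem sum_Icc_sub_succ_mul_le {a c : ℕ → ℝ} {D : ℝ} {T : ℕ}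
    (ha : ∀ t ∈ Icc 1 (T + 1), a t ∈ Set.Icc 0 D) (hc₀ : 0 ≤ c 0) (hc : Monotone c) :
    ∑ t ∈ Icc 1 T, (a t - a (t + 1)) * c t ≤ D * c T := by
  suffices h : ∑ t ∈ Icc 1 T, (a t - a (t + 1)) * c t ≤ (D - a (T + 1)) * c T by
    nlinarith [(ha (T + 1) (by simp)).1, hc₀.trans (hc (Nat.zero_le T))]
  induction T with
  | zero => simpa using mul_nonneg (sub_nonneg.2 (ha 1 (by simp)).2) hc₀
  | succ T ih =>
    have ha' : ∀ t ∈ Icc 1 (T + 1), a t ∈ Set.Icc 0 D := fun t ht =>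
      ha t (Icc_subset_Icc_right (by omega) ht)
    rw [sum_Icc_succ_top (by omega)]
    nlinarith [ih ha', (ha' (T + 1) (by simp)).2, hc (Nat.le_succ T)]

noncomputable def rootSumSq (g : ℕ → ℝ) (t : ℕ) : ℝ :=
  √(∑ i ∈ Icc 1 t, g i ^ 2)

section RootSumSq

variable (g : ℕ → ℝ)

theorem rootSumSq_nonneg (t : ℕ) : 0 ≤ rootSumSq g t := sqrt_nonneg _

theorem rootSumSq_zero : rootSumSq g 0 = 0 := by simp [rootSumSq]

theorem rootSumSq_sq (t : ℕ) : rootSumSq g t ^ 2 = ∑ i ∈ Icc 1 t, g i ^ 2 :=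
  sq_sqrt (sum_nonneg fun _ _ => sq_nonneg _)

theorem rootSumSq_succ_sq (t : ℕ) :
    rootSumSq g (t + 1) ^ 2 = rootSumSq g t ^ 2 + g (t + 1) ^ 2 := by
  rw [rootSumSq_sq, rootSumSq_sq, sum_Icc_succ_top (by omega)]

theorem monotone_rootSumSq : Monotone (rootSumSq g) :=
  monotone_nat_of_le_succ fun t => by
    rw [← abs_of_nonneg (rootSumSq_nonneg g t), ← abs_of_nonneg (rootSumSq_nonneg g (t + 1))]
    exact sq_le_sq.1 (by rw [rootSumSq_succ_sq]; nlinarith [sq_nonneg (g (t + 1))])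

theorem sq_le_rootSumSq_sq {t : ℕ} (ht : 1 ≤ t) : g t ^ 2 ≤ rootSumSq g t ^ 2 := by
  obtain ⟨t, rfl⟩ := Nat.exists_eq_add_of_le' ht
  rw [rootSumSq_succ_sq]; nlinarith [sq_nonneg (rootSumSq g t)]

theorem sum_sq_div_rootSumSq_le (T : ℕ) :
    ∑ t ∈ Icc 1 T, g t ^ 2 / rootSumSq g t ≤ 2 * rootSumSq g T := by
  induction T with
  | zero => simp [rootSumSq_zero]
  | succ T ih =>
    rw [sum_Icc_succ_top (by omega)]
    suffices g (T + 1) ^ 2 / rootSumSq g (T + 1) ≤ 2 * (rootSumSq g (T + 1) - rootSumSq g T) by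
      linarith
    have hsq := rootSumSq_succ_sq g T
    have hmono := monotone_rootSumSq g (Nat.le_succ T)
    rcases (rootSumSq_nonneg g (T + 1)).eq_or_lt with h | h
    · rw [← h, div_zero]; linarith
    · rw [div_le_iff₀ h]; nlinarith [rootSumSq_nonneg g T]

end RootSumSq

theorem mul_le_of_sq_le_sq_sub_div_mul {η s g a b : ℝ} (hη : 0 < η) (hs : 0 ≤ s)
    (hg : g ^ 2 ≤ s ^ 2) (hb : b ^ 2 ≤ (a - η / s * g) ^ 2) :
    g * a ≤ s / (2 * η) * (a ^ 2 - b ^ 2) + η / (2 * s) * g ^ 2 := by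
  rcases hs.eq_or_lt with rfl | hs
  -- with `s = 0` the step `η / s` is Lean's `η / 0 = 0`, and `g = 0` makes both sides vanish
  · obtain rfl : g = 0 := by nlinarith
    simp
  · have hb' : s ^ 2 * b ^ 2 ≤ (s * a - η * g) ^ 2 := by
      rw [show s * a - η * g = s * (a - η / s * g) by field_simp, mul_pow]
      exact mul_le_mul_of_nonneg_left hb (sq_nonneg s)
    rw [div_mul_eq_mul_div, div_mul_eq_mul_div, div_add_div _ _ (by positivity) (by positivity),
      le_div_iff₀ (by positivity)]
    nlinarith

theorem adagrad_regret_le_s13 {η D : ℝ} (hη : 0 < η) {g a : ℕ → ℝ} {T : ℕ}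
    (ha : ∀ t ∈ Icc 1 (T + 1), |a t| ≤ D)
    (hstep : ∀ t ∈ Icc 1 T, a (t + 1) ^ 2 ≤ (a t - η / rootSumSq g t * g t) ^ 2) :
    ∑ t ∈ Icc 1 T, g t * a t ≤ (D ^ 2 / (2 * η) + η) * rootSumSq g T := by
  have hterm : ∀ t ∈ Icc 1 T, g t * a t ≤
      (a t ^ 2 - a (t + 1) ^ 2) * (rootSumSq g t / (2 * η)) + η / 2 * (g t ^ 2 / rootSumSq g t) :=
    fun t ht => by
      have := mul_le_of_sq_le_sq_sub_div_mul hη (rootSumSq_nonneg g t)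
        (sq_le_rootSumSq_sq g (mem_Icc.1 ht).1) (hstep t ht)
      convert this using 2 <;> ring
  have htele : ∑ t ∈ Icc 1 T, (a t ^ 2 - a (t + 1) ^ 2) * (rootSumSq g t / (2 * η)) ≤
      D ^ 2 * (rootSumSq g T / (2 * η)) :=
    sum_Icc_sub_succ_mul_le (fun t ht => ⟨sq_nonneg _, sq_le_sq.2 ((ha t ht).trans (le_abs_self D))⟩)
      (by simp [rootSumSq_zero]) ((monotone_rootSumSq g).div_const (by positivity))
  have hquad := sum_sq_div_rootSumSq_le g T
  calc ∑ t ∈ Icc 1 T, g t * a t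
      ≤ ∑ t ∈ Icc 1 T, (a t ^ 2 - a (t + 1) ^ 2) * (rootSumSq g t / (2 * η))
        + η / 2 * ∑ t ∈ Icc 1 T, g t ^ 2 / rootSumSq g t := by
        rw [mul_sum, ← sum_add_distrib]; exact sum_le_sum hterm
    _ ≤ D ^ 2 * (rootSumSq g T / (2 * η)) + η / 2 * (2 * rootSumSq g T) := by gcongr
    _ = (D ^ 2 / (2 * η) + η) * rootSumSq g T := by ring

theorem adagrad_regret_le_sqrt_two_mul {D : ℝ} {g a : ℕ → ℝ} {T : ℕ}
    (ha : ∀ t ∈ Icc 1 (T + 1), |a t| ≤ D)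
    (hstep : ∀ t ∈ Icc 1 T, a (t + 1) ^ 2 ≤ (a t - D / √2 / rootSumSq g t * g t) ^ 2) :
    ∑ t ∈ Icc 1 T, g t * a t ≤ √2 * D * rootSumSq g T := by
  rcases (abs_nonneg _).trans (ha 1 (by simp)) |>.eq_or_lt with rfl | hD
  · have hzero : ∀ t ∈ Icc 1 T, g t * a t = 0 := fun t ht => by
      simp [abs_nonpos_iff.1 (ha t (Icc_subset_Icc_right (by omega) ht))]
    simp [sum_eq_zero hzero]
  · have hcoef : D ^ 2 / (2 * (D / √2)) + D / √2 = √2 * D := by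
      field_simp; rw [sq_sqrt zero_le_two]; ring
    simpa [hcoef] using adagrad_regret_le_s13 (by positivity) ha hstep

theorem adagrad_per_coordinate_hypercube_bound_general {d : ℕ}
    (F : EuclideanSpace ℝ (Fin d) → ℝ)
    (hdiff : Differentiable ℝ F) (hconv : ConvexOn ℝ Set.univ F)
    (lo hi : Fin d → ℝ) (K : Set (EuclideanSpace ℝ (Fin d)))
    (hK : K = {z : EuclideanSpace ℝ (Fin d) | ∀ j, z j ∈ Set.Icc (lo j) (hi j)})
    (Dinf : ℝ)
    (hDinf : ∀ y ∈ K, ∀ z ∈ K, ∀ j, |y j - z j| ≤ Dinf)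
    (proj : EuclideanSpace ℝ (Fin d) → EuclideanSpace ℝ (Fin d))
    (hprojmem : ∀ z, proj z ∈ K)
    (hproj : ∀ z, ∀ y ∈ K, ‖proj z - z‖ ≤ ‖y - z‖)
    (T : ℕ)
    (x : ℕ → EuclideanSpace ℝ (Fin d)) (hx1 : x 1 ∈ K)
    (hupdate : ∀ t ∈ Finset.Icc 1 T,
      x (t + 1) = proj ((EuclideanSpace.equiv (Fin d) ℝ).symm (fun j =>
        x t j - (Dinf / Real.sqrt 2) /
            Real.sqrt (∑ i ∈ Finset.Icc 1 t, (gradient F (x i) j) ^ 2) *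
          gradient F (x t) j))) :
    ∀ y ∈ K, ∑ t ∈ Finset.Icc 1 T, (F (x t) - F y) ≤
      Real.sqrt (2 * d * Dinf ^ 2 * ∑ t ∈ Finset.Icc 1 T, ‖gradient F (x t)‖ ^ 2) := by
  intro y hy
  subst hK
  set g : Fin d → ℕ → ℝ := fun j t => gradient F (x t) j
  have hxK : ∀ t ∈ Icc 1 (T + 1), ∀ j, x t j ∈ Set.Icc (lo j) (hi j) := by
    intro t ht
    obtain ⟨t, rfl⟩ := Nat.exists_eq_add_of_le' (mem_Icc.1 ht).1
    rcases t.eq_zero_or_pos with rfl | h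
    · exact hx1
    · rw [hupdate t (mem_Icc.2 ⟨h, by simpa using (mem_Icc.1 ht).2⟩)]; exact hprojmem _
  have hcoord (j : Fin d) :
      ∑ t ∈ Icc 1 T, g j t * (x t j - y j) ≤ √2 * Dinf * rootSumSq (g j) T := by
    refine adagrad_regret_le_sqrt_two_mul (fun t ht => hDinf _ (hxK t ht) y hy j) fun t ht => ?_
    rw [hupdate t ht, EuclideanSpace.apply_eq_clamp_of_forall_norm_sub_le (hprojmem _) (hproj _)]
    exact (sq_clamp_sub_le_sq_sub (v := x t j - Dinf / √2 / rootSumSq (g j) t * g j t)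
      (hy j)).trans_eq (by ring)
  have hnorm : ∑ j, rootSumSq (g j) T ^ 2 = ∑ t ∈ Icc 1 T, ‖gradient F (x t)‖ ^ 2 := by
    simp only [rootSumSq_sq, EuclideanSpace.real_norm_sq_eq, g]
    exact sum_comm
  calc ∑ t ∈ Icc 1 T, (F (x t) - F y)
      ≤ ∑ t ∈ Icc 1 T, ∑ j, g j t * (x t j - y j) :=
        sum_le_sum fun t _ => hconv.sub_le_sum_gradient_mul (hdiff (x t)) y
    _ = ∑ j, ∑ t ∈ Icc 1 T, g j t * (x t j - y j) := sum_comm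
    _ ≤ ∑ j, √2 * Dinf * rootSumSq (g j) T := sum_le_sum fun j _ => hcoord j
    _ ≤ √(∑ j : Fin d, (√2 * Dinf) ^ 2) * √(∑ j, rootSumSq (g j) T ^ 2) :=
        sum_mul_le_sqrt_mul_sqrt _ _ _
    _ = √(2 * d * Dinf ^ 2 * ∑ t ∈ Icc 1 T, ‖gradient F (x t)‖ ^ 2) := by
        rw [hnorm, ← sqrt_mul (by positivity), sum_const, card_univ, Fintype.card_fin, nsmul_eq_mul,
          mul_pow, sq_sqrt zero_le_two]
        ring_nf

/-- Regret-type bound for per-coordinate AdaGrad on a hypercube. -/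
theorem adagrad_per_coordinate_hypercube_bound {d : ℕ} (hd : 0 < d)
    (F : EuclideanSpace ℝ (Fin d) → ℝ)
    (hdiff : Differentiable ℝ F) (hconv : ConvexOn ℝ Set.univ F)
    (lo hi : Fin d → ℝ) (K : Set (EuclideanSpace ℝ (Fin d)))
    (hK : K = {z : EuclideanSpace ℝ (Fin d) | ∀ j, z j ∈ Set.Icc (lo j) (hi j)})
    (Dinf : ℝ)
    (hDinf : ∀ y ∈ K, ∀ z ∈ K, ∀ j, |y j - z j| ≤ Dinf)
    (proj : EuclideanSpace ℝ (Fin d) → EuclideanSpace ℝ (Fin d))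
    (hprojmem : ∀ z, proj z ∈ K)
    (hproj : ∀ z, ∀ y ∈ K, ‖proj z - z‖ ≤ ‖y - z‖)
    (T : ℕ) (hT : 1 ≤ T)
    (x : ℕ → EuclideanSpace ℝ (Fin d)) (hx1 : x 1 ∈ K)
    (hpos : ∀ t ∈ Finset.Icc 1 T, ∀ j,
      0 < ∑ i ∈ Finset.Icc 1 t, (gradient F (x i) j) ^ 2)
    (hupdate : ∀ t ∈ Finset.Icc 1 T,
      x (t + 1) = proj ((EuclideanSpace.equiv (Fin d) ℝ).symm (fun j =>
        x t j - (Dinf / Real.sqrt 2) /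
            Real.sqrt (∑ i ∈ Finset.Icc 1 t, (gradient F (x i) j) ^ 2) *
          gradient F (x t) j))) :
    ∀ y ∈ K, ∑ t ∈ Finset.Icc 1 T, (F (x t) - F y) ≤
      Real.sqrt (2 * d * Dinf ^ 2 * ∑ t ∈ Finset.Icc 1 T, ‖gradient F (x t)‖ ^ 2) :=
  adagrad_per_coordinate_hypercube_bound_general F hdiff hconv lo hi K hK Dinf hDinf proj hprojmem
    hproj T x hx1 hupdate
end

section
/- Let F: ℝ → ℝ be twice continuously differentiable. Then the following are equivalent: (1) there exist K₀ ≥ 0 and K₁ > 0 such that for all x, y ∈ ℝ with |y − x| ≤ 1/K₁, |F′(y) − F′(x)| ≤ (K₀ + K₁|F′(x)|)·|y − x|; (2) there exist L₀, L₁ ≥ 0 such that |F″(x)| ≤ L₀ + L₁|F′(x)| for all x ∈ ℝ. -/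
/-! Write `g = F′`. A relative Lipschitz bound on `g` near `x` bounds `‖g′ x‖` by the same
affine expression. Conversely, let `M` be the maximum of `‖g t - g x‖` on `[x, y]`; the derivative
bound gives `‖g′‖ ≤ L₀ + L₁ (‖g x‖ + M)` there, so the mean value inequality yields
`M ≤ (L₀ + L₁ ‖g x‖ + L₁ M) |y - x|`, and `L₁ |y - x| ≤ 1/2` absorbs the `M` on the right. -/

open Set

section

variable {E : Type*} [NormedAddCommGroup E] [NormedSpace ℝ E] {g : ℝ → E}

theorem norm_deriv_le_of_norm_sub_le_affine {K₀ K₁ : ℝ} (hK₀ : 0 ≤ K₀) (hK₁ : 0 < K₁)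
    (h : ∀ x y : ℝ, |y - x| ≤ 1 / K₁ → ‖g y - g x‖ ≤ (K₀ + K₁ * ‖g x‖) * |y - x|) (x : ℝ) :
    ‖deriv g x‖ ≤ K₀ + K₁ * ‖g x‖ := by
  refine norm_deriv_le_of_lip' (by positivity) ?_
  filter_upwards [Metric.closedBall_mem_nhds x (by positivity : 0 < 1 / K₁)] with y hy
  rw [Real.norm_eq_abs]
  exact h x y (by rwa [Metric.mem_closedBall, Real.dist_eq] at hy)

variable {L₀ L₁ : ℝ}

theorem norm_sub_le_of_norm_deriv_le_affine_of_forall_mem_uIcc (hg : Differentiable ℝ g)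
    (hL₁ : 0 ≤ L₁) (h : ∀ t, ‖deriv g t‖ ≤ L₀ + L₁ * ‖g t‖) {x y M : ℝ}
    (hM : ∀ t ∈ uIcc x y, ‖g t - g x‖ ≤ M) {t : ℝ} (ht : t ∈ uIcc x y) :
    ‖g t - g x‖ ≤ (L₀ + L₁ * (‖g x‖ + M)) * |y - x| := by
  have hbound : ∀ s ∈ uIcc x y, ‖deriv g s‖ ≤ L₀ + L₁ * (‖g x‖ + M) := fun s hs =>
    calc ‖deriv g s‖ ≤ L₀ + L₁ * ‖g s‖ := h s
      _ ≤ L₀ + L₁ * (‖g x‖ + M) := by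
        gcongr
        linarith [norm_le_norm_add_norm_sub' (g s) (g x), hM s hs]
  have hC : 0 ≤ L₀ + L₁ * (‖g x‖ + M) := (norm_nonneg _).trans (hbound x left_mem_uIcc)
  calc ‖g t - g x‖ ≤ (L₀ + L₁ * (‖g x‖ + M)) * |t - x| := by
        simpa only [Real.norm_eq_abs] using
          (convex_uIcc x y).norm_image_sub_le_of_norm_deriv_le (fun s _ => hg s) hbound
            left_mem_uIcc ht
    _ ≤ (L₀ + L₁ * (‖g x‖ + M)) * |y - x| :=
        mul_le_mul_of_nonneg_left (abs_sub_left_of_mem_uIcc ht) hC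

theorem norm_sub_le_of_norm_deriv_le_affine (hg : Differentiable ℝ g) (hL₁ : 0 ≤ L₁)
    (h : ∀ t, ‖deriv g t‖ ≤ L₀ + L₁ * ‖g t‖) {x y : ℝ} (hxy : L₁ * |y - x| ≤ 1 / 2) :
    ‖g y - g x‖ ≤ 2 * (L₀ + L₁ * ‖g x‖) * |y - x| := by
  obtain ⟨c, hc, hmax⟩ := isCompact_uIcc.exists_isMaxOn ⟨x, left_mem_uIcc⟩
    (hg.continuous.sub continuous_const).norm.continuousOn
  set M := ‖g c - g x‖
  have hM : ∀ t ∈ uIcc x y, ‖g t - g x‖ ≤ M := fun t ht => hmax ht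
  have hMc : M ≤ (L₀ + L₁ * (‖g x‖ + M)) * |y - x| :=
    norm_sub_le_of_norm_deriv_le_affine_of_forall_mem_uIcc hg hL₁ h hM hc
  calc ‖g y - g x‖ ≤ M := hM y right_mem_uIcc
    _ ≤ 2 * (L₀ + L₁ * ‖g x‖) * |y - x| := by nlinarith [norm_nonneg (g c - g x)]

end

/-- Equivalence of the two formulations of `(L₀, L₁)`-smoothness for
twice continuously differentiable functions on `ℝ`. -/
theorem relaxed_smoothness_equivalence (F : ℝ → ℝ) (hF : ContDiff ℝ 2 F) :
    (∃ K₀ K₁ : ℝ, 0 ≤ K₀ ∧ 0 < K₁ ∧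
      ∀ x y : ℝ, |y - x| ≤ 1 / K₁ →
        |deriv F y - deriv F x| ≤ (K₀ + K₁ * |deriv F x|) * |y - x|) ↔
    (∃ L₀ L₁ : ℝ, 0 ≤ L₀ ∧ 0 ≤ L₁ ∧
      ∀ x : ℝ, |deriv (deriv F) x| ≤ L₀ + L₁ * |deriv F x|) := by
  simp only [← Real.norm_eq_abs (deriv F _ - _), ← Real.norm_eq_abs (deriv F _),
    ← Real.norm_eq_abs (deriv (deriv F) _)]
  constructor
  · rintro ⟨K₀, K₁, hK₀, hK₁, h⟩
    exact ⟨K₀, K₁, hK₀, hK₁.le, norm_deriv_le_of_norm_sub_le_affine hK₀ hK₁ h⟩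
  · rintro ⟨L₀, L₁, hL₀, hL₁, h⟩
    have hdF : Differentiable ℝ (deriv F) := (hF.iterate_deriv' 1 1).differentiable one_ne_zero
    refine ⟨2 * L₀, max (2 * L₁) 1, by positivity, by positivity, fun x y hxy => ?_⟩
    have hK₁ : 0 < max (2 * L₁) 1 := by positivity
    have hxy' : L₁ * |y - x| ≤ 1 / 2 := by
      rw [le_div_iff₀ hK₁] at hxy
      nlinarith [le_max_left (2 * L₁) 1, abs_nonneg (y - x)]
    calc ‖deriv F y - deriv F x‖ ≤ 2 * (L₀ + L₁ * ‖deriv F x‖) * |y - x| :=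
          norm_sub_le_of_norm_deriv_le_affine hdF hL₁ h hxy'
      _ ≤ (2 * L₀ + max (2 * L₁) 1 * ‖deriv F x‖) * |y - x| := by
        rw [mul_add, ← mul_assoc]
        gcongr
        exact le_max_left _ _
end

section
/- Let F: ℝ^d → ℝ be differentiable and coordinate-wise (L0, L1)-smooth with L0_j = L₀ and L1_j = L₁ for all j ∈ {1,…,d}, where L₀, L₁ ≥ 0. Then for all x, y ∈ ℝ^d with ‖y − x‖₂ ≤ 1/L₁ (no constraint if L₁ = 0): ‖∇F(y) − ∇F(x)‖₂ ≤ (√2·L₀ + √2·L₁·‖∇F(x)‖₂)·‖y − x‖₂. -/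
namespace EuclideanSpace

variable {ι : Type*} [Fintype ι]

theorem norm_le_norm_of_abs_apply_le {w t : EuclideanSpace ℝ ι} (h : ∀ j, |w j| ≤ t j) :
    ‖w‖ ≤ ‖t‖ := by
  simp only [EuclideanSpace.norm_eq, Real.norm_eq_abs, sq_abs]
  refine Real.sqrt_le_sqrt (Finset.sum_le_sum fun j _ => ?_)
  exact sq_le_sq' (neg_le_of_abs_le (h j)) (le_of_abs_le (h j))

theorem norm_toLp_const (c : ℝ) :
    ‖WithLp.toLp 2 (Function.const ι c)‖ = √(Fintype.card ι) * |c| := by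
  simp [EuclideanSpace.norm_eq, Real.sqrt_sq_eq_abs]

theorem norm_toLp_abs (a : EuclideanSpace ℝ ι) :
    ‖WithLp.toLp 2 (fun j => |a j|)‖ = ‖a‖ := by
  simp [EuclideanSpace.norm_eq]

theorem norm_le_of_abs_apply_le_add_mul {w a : EuclideanSpace ℝ ι} {α β : ℝ}
    (hα : 0 ≤ α) (hβ : 0 ≤ β) (h : ∀ j, |w j| ≤ α + β * |a j|) :
    ‖w‖ ≤ √(Fintype.card ι) * α + β * ‖a‖ := by
  calc ‖w‖ ≤ ‖WithLp.toLp 2 (Function.const ι α) + β • WithLp.toLp 2 (fun j => |a j|)‖ :=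
        norm_le_norm_of_abs_apply_le (by simpa using h)
    _ ≤ ‖WithLp.toLp 2 (Function.const ι α)‖ + ‖β • WithLp.toLp 2 (fun j => |a j|)‖ :=
        norm_add_le _ _
    _ = √(Fintype.card ι) * α + β * ‖a‖ := by
        rw [norm_smul, norm_toLp_const, norm_toLp_abs, Real.norm_of_nonneg hβ, abs_of_nonneg hα]

end EuclideanSpace

theorem coordinatewise_smooth_implies_global_general {d : ℕ}
    (F : EuclideanSpace ℝ (Fin d) → ℝ)
    (L₀ L₁ : ℝ) (hL₀ : 0 ≤ L₀) (hL₁ : 0 ≤ L₁)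
    (hsmooth : ∀ y z : EuclideanSpace ℝ (Fin d),
      (L₁ = 0 ∨ ‖z - y‖ ≤ 1 / L₁) →
      ∀ j, |gradient F z j - gradient F y j| ≤
        (L₀ / Real.sqrt d + L₁ * |gradient F y j|) * ‖z - y‖) :
    ∀ y z : EuclideanSpace ℝ (Fin d), (L₁ = 0 ∨ ‖z - y‖ ≤ 1 / L₁) →
      ‖gradient F z - gradient F y‖ ≤
        (Real.sqrt 2 * L₀ + Real.sqrt 2 * L₁ * ‖gradient F y‖) * ‖z - y‖ := by
  intro y z hyz
  have hr : 0 ≤ ‖z - y‖ := norm_nonneg _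
  have hL₀d : √d * (L₀ / √d) ≤ L₀ := by
    rcases (Real.sqrt_nonneg (d : ℝ)).eq_or_lt with h | h
    · simp [← h, hL₀]
    · rw [mul_div_cancel₀ _ h.ne']
  -- Minkowski's inequality in `ℓ²` yields the bound even without the factor `√2`.
  have hsharp : ‖gradient F z - gradient F y‖ ≤ (L₀ + L₁ * ‖gradient F y‖) * ‖z - y‖ :=
    calc ‖gradient F z - gradient F y‖
        ≤ √d * (L₀ / √d * ‖z - y‖) + L₁ * ‖z - y‖ * ‖gradient F y‖ := by
          simpa using EuclideanSpace.norm_le_of_abs_apply_le_add_mul (by positivity)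
            (by positivity) fun j => (hsmooth y z hyz j).trans_eq (by ring)
      _ ≤ (L₀ + L₁ * ‖gradient F y‖) * ‖z - y‖ := by
          nlinarith [mul_le_mul_of_nonneg_right hL₀d hr]
  refine hsharp.trans (mul_le_mul_of_nonneg_right ?_ hr)
  have hsqrt2 : 1 ≤ √2 := Real.one_lt_sqrt_two.le
  nlinarith [mul_nonneg hL₁ (norm_nonneg (gradient F y))]

/-- Coordinate-wise `(L₀, L₁)`-smoothness with equal constants implies the global
relaxed smoothness condition on gradient differences (up to a factor `√2`). -/
theorem coordinatewise_smooth_implies_global {d : ℕ} (hd : 0 < d)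
    (F : EuclideanSpace ℝ (Fin d) → ℝ)
    (hdiff : Differentiable ℝ F)
    (L₀ L₁ : ℝ) (hL₀ : 0 ≤ L₀) (hL₁ : 0 ≤ L₁)
    (hsmooth : ∀ y z : EuclideanSpace ℝ (Fin d),
      (L₁ = 0 ∨ ‖z - y‖ ≤ 1 / L₁) →
      ∀ j, |gradient F z j - gradient F y j| ≤
        (L₀ / Real.sqrt d + L₁ * |gradient F y j|) * ‖z - y‖) :
    ∀ y z : EuclideanSpace ℝ (Fin d), (L₁ = 0 ∨ ‖z - y‖ ≤ 1 / L₁) →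
      ‖gradient F z - gradient F y‖ ≤
        (Real.sqrt 2 * L₀ + Real.sqrt 2 * L₁ * ‖gradient F y‖) * ‖z - y‖ :=
  coordinatewise_smooth_implies_global_general F L₀ L₁ hL₀ hL₁ hsmooth
end

section
/- Let F: ℝ^d → ℝ be differentiable and coordinate-wise (L0, L1)-smooth. Then for any x, y ∈ ℝ^d with ‖y − x‖₂ ≤ 1/‖L1‖_∞: F(y) ≤ F(x) + ⟨∇F(x), y − x⟩ + Σ_{j=1}^d ((L0_j/√d + L1_j·|∂_j F(x)|)·‖y − x‖₂ / 2)·|y_j − x_j|. -/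
/-!
Along the segment `t ↦ y + t • (z - y)`, coordinate-wise smoothness bounds the increment
`⟪∇F (y + t • (z - y)) - ∇F y, z - y⟫` by `t * K`, where `K` is twice the quadratic sum of the
claim. So the derivative of `t ↦ F (y + t • (z - y))` grows at most linearly, and integrating it
over `[0, 1]` produces `K / 2`.
-/

open scoped BigOperators

open Set

theorem le_add_deriv_add_half_of_deriv_le {φ φ' : ℝ → ℝ} {K : ℝ}
    (hφ : ∀ t ∈ Icc (0 : ℝ) 1, HasDerivAt φ (φ' t) t)
    (hφ' : ∀ t ∈ Icc (0 : ℝ) 1, φ' t ≤ φ' 0 + t * K) :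
    φ 1 ≤ φ 0 + φ' 0 + K / 2 := by
  set g : ℝ → ℝ := fun t => φ t - t * φ' 0 - t ^ 2 / 2 * K
  have hg : ∀ t ∈ Icc (0 : ℝ) 1, HasDerivAt g (φ' t - φ' 0 - t * K) t := fun t ht =>
    (((hφ t ht).sub ((hasDerivAt_id t).mul_const (φ' 0))).sub
      (((hasDerivAt_pow 2 t).div_const 2).mul_const K)).congr_deriv (by ring)
  have hanti : AntitoneOn g (Icc 0 1) := by
    refine antitoneOn_of_deriv_nonpos (convex_Icc 0 1)
      (fun t ht => (hg t ht).continuousAt.continuousWithinAt)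
      (fun t ht => (hg t (interior_subset ht)).differentiableAt.differentiableWithinAt)
      fun t ht => ?_
    rw [(hg t (interior_subset ht)).deriv]
    linarith [hφ' t (interior_subset ht)]
  have := hanti (left_mem_Icc.2 zero_le_one) (right_mem_Icc.2 zero_le_one) zero_le_one
  simp only [g] at this
  linarith

theorem HasGradientAt.hasDerivAt_comp_add_smul {E : Type*} [NormedAddCommGroup E]
    [InnerProductSpace ℝ E] [CompleteSpace E] {F : E → ℝ} {g y v : E} {t : ℝ}
    (hF : HasGradientAt F g (y + t • v)) :
    HasDerivAt (fun s : ℝ => F (y + s • v)) (inner ℝ g v) t := by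
  have hline : HasDerivAt (fun s : ℝ => y + s • v) v t := by
    simpa using ((hasDerivAt_id t).smul_const v).const_add y
  exact hF.hasFDerivAt.comp_hasDerivAt t hline

theorem le_add_inner_gradient_add_half_of_inner_gradient_sub_le {E : Type*}
    [NormedAddCommGroup E] [InnerProductSpace ℝ E] [CompleteSpace E] {F : E → ℝ} {y v : E}
    {K : ℝ} (hF : ∀ t ∈ Icc (0 : ℝ) 1, DifferentiableAt ℝ F (y + t • v))
    (hgrad : ∀ t ∈ Icc (0 : ℝ) 1, inner ℝ (gradient F (y + t • v) - gradient F y) v ≤ t * K) :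
    F (y + v) ≤ F y + inner ℝ (gradient F y) v + K / 2 := by
  have key := le_add_deriv_add_half_of_deriv_le (φ := fun s => F (y + s • v))
    (φ' := fun s => inner ℝ (gradient F (y + s • v)) v) (K := K)
    (fun t ht => (hF t ht).hasGradientAt.hasDerivAt_comp_add_smul) fun t ht => by
      simp only [zero_smul, add_zero]
      linarith [inner_sub_left (𝕜 := ℝ) (gradient F (y + t • v)) (gradient F y) v, hgrad t ht]
  simpa using key

theorem inner_le_sum_mul_abs_of_abs_le {ι : Type*} [Fintype ι] {u v : EuclideanSpace ℝ ι}
    {B : ι → ℝ}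
    (hu : ∀ j, |u j| ≤ B j) : inner ℝ u v ≤ ∑ j, B j * |v j| := by
  rw [PiLp.inner_apply]
  refine Finset.sum_le_sum fun j _ => ?_
  calc inner ℝ (u j) (v j) ≤ ‖u j‖ * ‖v j‖ := real_inner_le_norm _ _
    _ = |u j| * |v j| := by rw [Real.norm_eq_abs, Real.norm_eq_abs]
    _ ≤ B j * |v j| := mul_le_mul_of_nonneg_right (hu j) (abs_nonneg _)

theorem descent_lemma_coordinatewise_relaxed_smooth_general {d : ℕ}
    (F : EuclideanSpace ℝ (Fin d) → ℝ)
    (hdiff : Differentiable ℝ F)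
    (L0 L1 : Fin d → ℝ)
    (hsmooth : ∀ y z : EuclideanSpace ℝ (Fin d), ‖z - y‖ ≤ 1 / ‖L1‖ →
      ∀ j, |gradient F z j - gradient F y j| ≤
        (L0 j / Real.sqrt d + L1 j * |gradient F y j|) * ‖z - y‖) :
    ∀ y z : EuclideanSpace ℝ (Fin d), ‖z - y‖ ≤ 1 / ‖L1‖ →
      F z ≤ F y + (inner ℝ (gradient F y) (z - y) : ℝ) +
        ∑ j, (L0 j / Real.sqrt d + L1 j * |gradient F y j|) * ‖z - y‖ / 2 *
          |z j - y j| := by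
  intro y z hzy
  set C : Fin d → ℝ := fun j => L0 j / Real.sqrt d + L1 j * |gradient F y j|
  have hgrad : ∀ t ∈ Icc (0 : ℝ) 1,
      inner ℝ (gradient F (y + t • (z - y)) - gradient F y) (z - y) ≤
        t * ∑ j, C j * ‖z - y‖ * |z j - y j| := by
    rintro t ⟨ht0, ht1⟩
    have hdist : ‖y + t • (z - y) - y‖ = t * ‖z - y‖ := by
      rw [add_sub_cancel_left, norm_smul, Real.norm_of_nonneg ht0]
    have hclose : ‖y + t • (z - y) - y‖ ≤ 1 / ‖L1‖ :=
      hdist ▸ (mul_le_of_le_one_left (norm_nonneg _) ht1).trans hzy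
    calc _ ≤ ∑ j, C j * ‖y + t • (z - y) - y‖ * |(z - y) j| :=
          inner_le_sum_mul_abs_of_abs_le fun j => by simpa using hsmooth y _ hclose j
      _ = _ := by
          rw [hdist, Finset.mul_sum]
          simp only [PiLp.sub_apply]
          exact Finset.sum_congr rfl fun j _ => by ring
  have key := le_add_inner_gradient_add_half_of_inner_gradient_sub_le (fun t _ => hdiff _) hgrad
  rwa [add_sub_cancel, Finset.sum_div,
    Finset.sum_congr rfl fun j _ => mul_div_right_comm (C j * ‖z - y‖) |z j - y j| 2] at key

/-- Descent lemma under coordinate-wise `(L0, L1)`-smoothness. -/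
theorem descent_lemma_coordinatewise_relaxed_smooth {d : ℕ} (hd : 0 < d)
    (F : EuclideanSpace ℝ (Fin d) → ℝ)
    (hdiff : Differentiable ℝ F)
    (L0 L1 : Fin d → ℝ) (hL0 : ∀ j, 0 ≤ L0 j) (hL1 : ∀ j, 0 ≤ L1 j)
    (hsmooth : ∀ y z : EuclideanSpace ℝ (Fin d), ‖z - y‖ ≤ 1 / ‖L1‖ →
      ∀ j, |gradient F z j - gradient F y j| ≤
        (L0 j / Real.sqrt d + L1 j * |gradient F y j|) * ‖z - y‖) :
    ∀ y z : EuclideanSpace ℝ (Fin d), ‖z - y‖ ≤ 1 / ‖L1‖ →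
      F z ≤ F y + (inner ℝ (gradient F y) (z - y) : ℝ) +
        ∑ j, (L0 j / Real.sqrt d + L1 j * |gradient F y j|) * ‖z - y‖ / 2 *
          |z j - y j| :=
  descent_lemma_coordinatewise_relaxed_smooth_general F hdiff L0 L1 hsmooth
end
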